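/- arXiv:1003.5853 — 8 statements merged into one kernel-verified Lean document; each statement's English description precedes it below -/
import Mathlib

section
/- The evolution family U(t,s)(x1,x2) = ((u(s)/u(t))x1, (u(t)/u(s))x2) on R^2, where u(t) = e^{t(3+cos^2 t)}, satisfies the dichotomy estimate ||U(t,s)P(s)(x,0)|| ≤ e^s e^{-3(t-s)} |x| for all t ≥ s ≥ 0 and x ∈ R, where P(t)(x1,x2) = (x1,0). -/
open Real

/-- The vector `(a, b)` in `ℝ²` with the Euclidean norm. -/
noncomputable def vec2 (a b : ℝ) : EuclideanSpace ℝ (Fin 2) :=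
  (WithLp.equiv 2 (Fin 2 → ℝ)).symm ![a, b]

/-- Stable dichotomy estimate for the evolution family
`U(t,s)(x₁,x₂) = ((u s / u t)·x₁, (u t / u s)·x₂)` on `ℝ²` with the Euclidean norm,
where `u t = exp (t(3+cos²t))`:  `‖U(t,s)P(s)(x,0)‖ ≤ eˢ e^{-3(t-s)} |x|`,
with `P(t)(x₁,x₂) = (x₁,0)`. -/
theorem stmt_0 (u : ℝ → ℝ) (hu : ∀ t, u t = Real.exp (t * (3 + Real.cos t ^ 2)))
    (U : ℝ → ℝ → EuclideanSpace ℝ (Fin 2) → EuclideanSpace ℝ (Fin 2))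
    (hU : ∀ t s v, U t s v = vec2 ((u s / u t) * v 0) ((u t / u s) * v 1))
    (P : ℝ → EuclideanSpace ℝ (Fin 2) → EuclideanSpace ℝ (Fin 2))
    (hP : ∀ t v, P t v = vec2 (v 0) 0)
    (t s x : ℝ) (hs : 0 ≤ s) (hst : s ≤ t) :
    ‖U t s (P s (vec2 x 0))‖ ≤ Real.exp s * Real.exp (-3 * (t - s)) * |x| := by
  have hv : ∀ a b : ℝ, (vec2 a b) 0 = a ∧ (vec2 a b) 1 = b := by
    intro a b; constructor <;> rfl
  have hnorm : ∀ a : ℝ, ‖vec2 a 0‖ = |a| := by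
    intro a
    rw [show vec2 a 0 = (WithLp.equiv 2 (Fin 2 → ℝ)).symm ![a, 0] from rfl,
      EuclideanSpace.norm_eq]
    simp [Fin.sum_univ_two, Real.sqrt_sq_eq_abs]
  rw [hP, hU]
  rw [(hv x 0).1]
  have h0 : (vec2 x 0) 0 = x := (hv x 0).1
  have h1 : (vec2 x 0) 1 = 0 := (hv x 0).2
  rw [(hv x 0).1, (hv x 0).2, mul_zero]
  rw [hnorm, abs_mul]
  have hut : 0 < u t := by rw [hu]; exact Real.exp_pos _
  have hus : 0 < u s := by rw [hu]; exact Real.exp_pos _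
  have hdiv : |u s / u t| = Real.exp (s * (3 + Real.cos s ^ 2) - t * (3 + Real.cos t ^ 2)) := by
    rw [abs_of_pos (div_pos hus hut), hu, hu, ← Real.exp_sub]
  rw [hdiv, ← Real.exp_add]
  have hle : s * (3 + Real.cos s ^ 2) - t * (3 + Real.cos t ^ 2) ≤ s + -3 * (t - s) := by
    have h1 : s * Real.cos s ^ 2 ≤ s := by
      nlinarith [Real.cos_sq_le_one s, sq_nonneg (Real.cos s)]
    have h2 : 0 ≤ t * Real.cos t ^ 2 := mul_nonneg (le_trans hs hst) (sq_nonneg _)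
    nlinarith
  exact mul_le_mul_of_nonneg_right (Real.exp_le_exp.mpr hle) (abs_nonneg x)
end

section
/- There do not exist constants N ≥ 1 and ν > 0 such that e^{-3(t-s) - t cos^2 t + s cos^2 s} ≤ N e^{-ν(t-s)} for all t ≥ s ≥ 0. Hence the evolution family from Example 2 (with u(t) = e^{t(3+cos^2 t)}) does not admit a uniform exponential dichotomy with projection P(t)(x1,x2) = (x1,0). -/
open Real

/-- There are no constants `N ≥ 1` and `ν > 0` such that
`exp (-3(t-s) - t·cos² t + s·cos² s) ≤ N · exp (-ν(t-s))` for all `t ≥ s ≥ 0`;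
hence the evolution family of Example 2 (with `u t = exp (t(3+cos²t))`) does not
admit a uniform exponential dichotomy with projection `P(t)(x₁,x₂) = (x₁,0)`. -/
theorem stmt_2 :
    ¬ ∃ (N ν : ℝ), 1 ≤ N ∧ 0 < ν ∧
      ∀ t s : ℝ, 0 ≤ s → s ≤ t →
        Real.exp (-3 * (t - s) - t * Real.cos t ^ 2 + s * Real.cos s ^ 2) ≤
          N * Real.exp (-ν * (t - s)) := by
  rintro ⟨N, ν, hN, hν, h⟩
  obtain ⟨n, hn⟩ := exists_nat_gt ((Real.log N + 3 * π / 2) / π)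
  have hπ := Real.pi_pos
  set s : ℝ := (n : ℝ) * π with hs_def
  set t : ℝ := (n : ℝ) * π + π / 2 with ht_def
  have hs : 0 ≤ s := by positivity
  have hst : s ≤ t := by simp only [hs_def, ht_def]; linarith
  have hct : Real.cos t = 0 := by
    simp [ht_def, Real.cos_add, Real.sin_nat_mul_pi]
  have hcs : Real.cos s ^ 2 = 1 := by
    have := Real.sin_sq_add_cos_sq s
    rw [show Real.sin s = 0 from Real.sin_nat_mul_pi n] at this
    nlinarith
  have key := h t s hs hst
  rw [hct, hcs] at key
  have hts : t - s = π / 2 := by simp [ht_def, hs_def]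
  rw [hts] at key
  have hexp1 : Real.exp (-ν * (π / 2)) ≤ 1 := by
    apply Real.exp_le_one_iff.mpr
    nlinarith
  have hNpos : 0 < N := lt_of_lt_of_le one_pos hN
  have key2 : Real.exp (-3 * (π / 2) - t * 0 ^ 2 + s * 1) ≤ N := by
    calc Real.exp (-3 * (π / 2) - t * 0 ^ 2 + s * 1) ≤ N * Real.exp (-ν * (π / 2)) := key
    _ ≤ N * 1 := by nlinarith
    _ = N := mul_one N
  have key3 : -3 * (π / 2) - t * 0 ^ 2 + s * 1 ≤ Real.log N :=
    (Real.le_log_iff_exp_le hNpos).mpr key2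
  have hn' : Real.log N + 3 * π / 2 < (n : ℝ) * π := by
    rwa [div_lt_iff₀ hπ] at hn
  simp only [hs_def] at key3
  nlinarith
end

section
/- Let U be an evolution family on R^2 given by U(t,s)(x1,x2) = ((u1(s)/u1(t))x1, (u2(t)/u2(s))x2) with u1(t) = e^{t(1+cos^2 t)} and u2(t) = e^{t cos^2 t}, and let P(t)(x1,x2) = (x1,0). Then for every p > 0, t ≥ 0 and x = (x1,x2) ∈ R^2: ∫_t^∞ e^{(p/2)(τ-t)} ||U_P(τ,t)x||^p dτ + ∫_0^t e^{(p/2)(t-τ)} ||U_Q(τ,t)x||^p dτ ≤ (2/p) e^{pt} (||P(t)x||^p + ||Q(t)x||^p), where U_P(τ,t)x = (e^{t(1+cos^2 t) - τ(1+cos^2 τ)} x1, 0) and U_Q(τ,t)x = (0, e^{τ cos^2 τ - t cos^2 t} x2). -/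
open Real MeasureTheory

lemma norm_vec2 (a b : ℝ) : ‖vec2 a b‖ = Real.sqrt (a ^ 2 + b ^ 2) := by
  simp [vec2, EuclideanSpace.norm_eq, Fin.sum_univ_two, sq_abs]

lemma norm_vec2_fst (a : ℝ) : ‖vec2 a 0‖ = |a| := by
  rw [norm_vec2]; simp [Real.sqrt_sq_eq_abs]

lemma norm_vec2_snd (b : ℝ) : ‖vec2 0 b‖ = |b| := by
  rw [norm_vec2]; simp [Real.sqrt_sq_eq_abs]

lemma exp_decay_integrableOn (t b : ℝ) (hb : 0 < b) :
    IntegrableOn (fun τ : ℝ => Real.exp (-(b * (τ - t)))) (Set.Ioi t) := by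
  have h := (exp_neg_integrableOn_Ioi t hb).const_mul (Real.exp (b * t))
  refine (integrableOn_congr_fun (fun τ _ => ?_) measurableSet_Ioi).mpr h
  rw [← Real.exp_add]; ring_nf

lemma exp_decay_integral (t b : ℝ) (hb : 0 < b) :
    ∫ τ in Set.Ioi t, Real.exp (-(b * (τ - t))) = 1 / b := by
  have h1 : ∀ τ : ℝ, Real.exp (-(b * (τ - t))) = Real.exp (b * t) * Real.exp (-(b * τ)) := by
    intro τ; rw [← Real.exp_add]; ring_nf
  simp_rw [h1]
  rw [MeasureTheory.integral_const_mul]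
  have h2 := MeasureTheory.integral_comp_mul_left_Ioi (fun x => Real.exp (-x)) t hb
  simp only [smul_eq_mul] at h2
  rw [show (fun τ : ℝ => Real.exp (-(b * τ))) = fun τ => (fun x => Real.exp (-x)) (b * τ) from rfl]
  rw [h2, integral_exp_neg_Ioi, show Real.exp (b*t) * (b⁻¹ * Real.exp (-(b*t))) = b⁻¹ * (Real.exp (b*t) * Real.exp (-(b*t))) by ring, ← Real.exp_add]
  simp [one_div]

/-- For the evolution family `U(t,s)(x₁,x₂) = ((u₁ s/u₁ t)x₁, (u₂ t/u₂ s)x₂)` with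
`u₁ t = exp (t(1+cos²t))`, `u₂ t = exp (t·cos²t)` and the projection
`P(t)(x₁,x₂) = (x₁,0)`, for every `p > 0`, `t ≥ 0` and `x = (x₁,x₂) ∈ ℝ²`:
`∫_t^∞ e^{(p/2)(τ-t)} ‖U_P(τ,t)x‖^p dτ + ∫_0^t e^{(p/2)(t-τ)} ‖U_Q(τ,t)x‖^p dτ
  ≤ (2/p) e^{pt} (‖P(t)x‖^p + ‖Q(t)x‖^p)`,
where `U_P(τ,t)x = (exp (t(1+cos²t) - τ(1+cos²τ)) x₁, 0)` and
`U_Q(τ,t)x = (0, exp (τ·cos²τ - t·cos²t) x₂)`. -/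
theorem stmt_4
    (UP UQ : ℝ → ℝ → EuclideanSpace ℝ (Fin 2) → EuclideanSpace ℝ (Fin 2))
    (hUP : ∀ τ t v, UP τ t v =
      vec2 (Real.exp (t * (1 + Real.cos t ^ 2) - τ * (1 + Real.cos τ ^ 2)) * v 0) 0)
    (hUQ : ∀ τ t v, UQ τ t v =
      vec2 0 (Real.exp (τ * Real.cos τ ^ 2 - t * Real.cos t ^ 2) * v 1))
    (P Q : ℝ → EuclideanSpace ℝ (Fin 2) → EuclideanSpace ℝ (Fin 2))
    (hP : ∀ t v, P t v = vec2 (v 0) 0) (hQ : ∀ t v, Q t v = vec2 0 (v 1))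
    (p : ℝ) (hp : 0 < p) (t : ℝ) (ht : 0 ≤ t) (x : EuclideanSpace ℝ (Fin 2)) :
    (∫ τ in Set.Ioi t, Real.exp (p / 2 * (τ - t)) * ‖UP τ t x‖ ^ p) +
      (∫ τ in (0:ℝ)..t, Real.exp (p / 2 * (t - τ)) * ‖UQ τ t x‖ ^ p) ≤
      2 / p * Real.exp (p * t) * (‖P t x‖ ^ p + ‖Q t x‖ ^ p) := by
  have hb2 : (0:ℝ) < p / 2 := by positivity
  have hPx : ‖P t x‖ = |x 0| := by rw [hP, norm_vec2_fst]
  have hQx : ‖Q t x‖ = |x 1| := by rw [hQ, norm_vec2_snd]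
  set C0 : ℝ := |x 0| ^ p with hC0def
  set C1 : ℝ := |x 1| ^ p with hC1def
  have hC0 : 0 ≤ C0 := Real.rpow_nonneg (abs_nonneg _) p
  have hC1 : 0 ≤ C1 := Real.rpow_nonneg (abs_nonneg _) p
  have hUPn : ∀ τ : ℝ, Real.exp (p / 2 * (τ - t)) * ‖UP τ t x‖ ^ p =
      Real.exp (p / 2 * (τ - t) + p * (t * (1 + Real.cos t ^ 2) - τ * (1 + Real.cos τ ^ 2)))
        * C0 := by
    intro τ
    rw [hUP τ t x, norm_vec2_fst, abs_mul, abs_of_pos (Real.exp_pos _),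
      Real.mul_rpow (Real.exp_pos _).le (abs_nonneg _), ← Real.exp_mul, ← hC0def,
      ← mul_assoc, ← Real.exp_add]
    ring_nf
  have hUQn : ∀ τ : ℝ, Real.exp (p / 2 * (t - τ)) * ‖UQ τ t x‖ ^ p =
      Real.exp (p / 2 * (t - τ) + p * (τ * Real.cos τ ^ 2 - t * Real.cos t ^ 2)) * C1 := by
    intro τ
    rw [hUQ τ t x, norm_vec2_snd, abs_mul, abs_of_pos (Real.exp_pos _),
      Real.mul_rpow (Real.exp_pos _).le (abs_nonneg _), ← Real.exp_mul, ← hC1def,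
      ← mul_assoc, ← Real.exp_add]
    ring_nf
  -- first integral
  have hFint : IntegrableOn
      (fun τ : ℝ => Real.exp (p * t) * C0 * Real.exp (-(p / 2 * (τ - t)))) (Set.Ioi t) :=
    (exp_decay_integrableOn t (p / 2) hb2).const_mul _
  have hle1 : ∀ τ ∈ Set.Ioi t,
      Real.exp (p / 2 * (τ - t) + p * (t * (1 + Real.cos t ^ 2) - τ * (1 + Real.cos τ ^ 2)))
        * C0 ≤ Real.exp (p * t) * C0 * Real.exp (-(p / 2 * (τ - t))) := by
    intro τ hτ
    have hτt : t ≤ τ := le_of_lt hτ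
    have h1 : 0 ≤ p * (τ * Real.cos τ ^ 2) :=
      mul_nonneg hp.le (mul_nonneg (ht.trans hτt) (sq_nonneg _))
    have h2 : p * (t * Real.cos t ^ 2) ≤ p * t :=
      mul_le_mul_of_nonneg_left (mul_le_of_le_one_right ht (Real.cos_sq_le_one t)) hp.le
    have hexp : p / 2 * (τ - t) + p * (t * (1 + Real.cos t ^ 2) - τ * (1 + Real.cos τ ^ 2))
        ≤ p * t + -(p / 2 * (τ - t)) := by nlinarith
    calc _ ≤ Real.exp (p * t + -(p / 2 * (τ - t))) * C0 :=
          mul_le_mul_of_nonneg_right (Real.exp_le_exp.mpr hexp) hC0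
      _ = _ := by rw [Real.exp_add]; ring
  have hgc : Continuous (fun τ : ℝ =>
      Real.exp (p / 2 * (τ - t) + p * (t * (1 + Real.cos t ^ 2) - τ * (1 + Real.cos τ ^ 2)))
        * C0) := by fun_prop
  have hgint : IntegrableOn (fun τ : ℝ =>
      Real.exp (p / 2 * (τ - t) + p * (t * (1 + Real.cos t ^ 2) - τ * (1 + Real.cos τ ^ 2)))
        * C0) (Set.Ioi t) := by
    refine hFint.mono' hgc.aestronglyMeasurable ?_
    filter_upwards [ae_restrict_mem measurableSet_Ioi] with τ hτ
    rw [Real.norm_eq_abs, abs_of_nonneg (mul_nonneg (Real.exp_pos _).le hC0)]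
    exact hle1 τ hτ
  have hI1 : (∫ τ in Set.Ioi t, Real.exp (p / 2 * (τ - t)) * ‖UP τ t x‖ ^ p)
      ≤ 2 / p * Real.exp (p * t) * C0 := by
    simp_rw [hUPn]
    calc _ ≤ ∫ τ in Set.Ioi t, Real.exp (p * t) * C0 * Real.exp (-(p / 2 * (τ - t))) :=
          setIntegral_mono_on hgint hFint measurableSet_Ioi hle1
      _ = 2 / p * Real.exp (p * t) * C0 := by
          rw [MeasureTheory.integral_const_mul, exp_decay_integral t (p / 2) hb2]
          field_simp
  -- second integral
  have hle2 : ∀ τ ∈ Set.Icc (0:ℝ) t,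
      Real.exp (p / 2 * (t - τ) + p * (τ * Real.cos τ ^ 2 - t * Real.cos t ^ 2)) * C1
        ≤ Real.exp (p * t) * C1 * Real.exp (-(p / 2 * (t - τ))) := by
    intro τ hτ
    obtain ⟨hτ0, hτt⟩ := hτ
    have h1 : 0 ≤ p * (t * Real.cos t ^ 2) :=
      mul_nonneg hp.le (mul_nonneg ht (sq_nonneg _))
    have h2 : p * (τ * Real.cos τ ^ 2) ≤ p * τ :=
      mul_le_mul_of_nonneg_left (mul_le_of_le_one_right hτ0 (Real.cos_sq_le_one τ)) hp.le
    have hexp : p / 2 * (t - τ) + p * (τ * Real.cos τ ^ 2 - t * Real.cos t ^ 2)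
        ≤ p * t + -(p / 2 * (t - τ)) := by nlinarith
    calc _ ≤ Real.exp (p * t + -(p / 2 * (t - τ))) * C1 :=
          mul_le_mul_of_nonneg_right (Real.exp_le_exp.mpr hexp) hC1
      _ = _ := by rw [Real.exp_add]; ring
  have hint1 : IntervalIntegrable (fun τ : ℝ =>
      Real.exp (p / 2 * (t - τ) + p * (τ * Real.cos τ ^ 2 - t * Real.cos t ^ 2)) * C1)
      volume 0 t := (by fun_prop : Continuous _).intervalIntegrable _ _
  have hint2 : IntervalIntegrable (fun τ : ℝ =>
      Real.exp (p * t) * C1 * Real.exp (-(p / 2 * (t - τ)))) volume 0 t :=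
    (by fun_prop : Continuous _).intervalIntegrable _ _
  have hval2 : (∫ τ in (0:ℝ)..t, Real.exp (p * t) * C1 * Real.exp (-(p / 2 * (t - τ))))
      ≤ 2 / p * Real.exp (p * t) * C1 := by
    have heq : ∀ τ : ℝ, Real.exp (p * t) * C1 * Real.exp (-(p / 2 * (t - τ)))
        = Real.exp (p * t) * C1 * Real.exp (p / 2 * τ + -(p / 2 * t)) := by
      intro τ; congr 1; congr 1; ring
    simp_rw [heq]
    rw [intervalIntegral.integral_const_mul]
    have hcomp := intervalIntegral.integral_comp_mul_add (a := (0:ℝ)) (b := t)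
      (fun y => Real.exp y) (ne_of_gt hb2) (-(p / 2 * t))
    rw [hcomp, integral_exp]
    have hee : (0:ℝ) ≤ Real.exp (p / 2 * 0 + -(p / 2 * t)) := (Real.exp_pos _).le
    have h1 : Real.exp (p / 2 * t + -(p / 2 * t)) = 1 := by
      rw [show p / 2 * t + -(p / 2 * t) = 0 by ring, Real.exp_zero]
    rw [h1, smul_eq_mul]
    have hEC : 0 ≤ Real.exp (p * t) * C1 := mul_nonneg (Real.exp_pos _).le hC1
    have hinv : (p / 2)⁻¹ = 2 / p := by field_simp
    rw [hinv]
    have : (2 / p) * (1 - Real.exp (p / 2 * 0 + -(p / 2 * t))) ≤ 2 / p := by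
      have h2p : (0:ℝ) < 2 / p := by positivity
      nlinarith
    nlinarith
  have hI2 : (∫ τ in (0:ℝ)..t, Real.exp (p / 2 * (t - τ)) * ‖UQ τ t x‖ ^ p)
      ≤ 2 / p * Real.exp (p * t) * C1 := by
    simp_rw [hUQn]
    calc _ ≤ ∫ τ in (0:ℝ)..t, Real.exp (p * t) * C1 * Real.exp (-(p / 2 * (t - τ))) :=
          intervalIntegral.integral_mono_on ht hint1 hint2 hle2
      _ ≤ _ := hval2
  rw [hPx, hQx]
  calc _ ≤ 2 / p * Real.exp (p * t) * C0 + 2 / p * Real.exp (p * t) * C1 :=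
        add_le_add hI1 hI2
    _ = _ := by rw [hC0def, hC1def]; ring
end

section
/- The evolution family U(t,s)(x1,x2) = ((u1(s)/u1(t))x1, (u2(t)/u2(s))x2), with u1(t)=e^{t(1+cos^2 t)} and u2(t)=e^{t cos^2 t}, does not admit a (nonuniform) exponential dichotomy with dichotomy projection P(t)(x1,x2)=(x1,0): there are no constants N ≥ 1, α ≥ 0, ν > 0 such that ||U_Q(s,t)(0,x)|| ≤ N e^{αs} e^{-ν(t-s)} |x| for all t ≥ s ≥ 0 and x ∈ R. -/
open Real

/-- The evolution family with `u₁ t = exp (t(1+cos²t))`, `u₂ t = exp (t·cos²t)` does not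
admit a (nonuniform) exponential dichotomy with dichotomy projection onto the first
coordinate: since `‖U_Q(s,t)(0,x)‖ = exp (s·cos²s - t·cos²t)·|x|`, there are no constants
`N ≥ 1`, `α ≥ 0`, `ν > 0` with the required unstable estimate. -/
theorem stmt_5 :
    ¬ ∃ (N α ν : ℝ), 1 ≤ N ∧ 0 ≤ α ∧ 0 < ν ∧
      ∀ t s x : ℝ, 0 ≤ s → s ≤ t →
        Real.exp (s * Real.cos s ^ 2 - t * Real.cos t ^ 2) * |x| ≤
          N * Real.exp (α * s) * Real.exp (-ν * (t - s)) * |x| := by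
  rintro ⟨N, α, ν, hN, hα, hν, h⟩
  -- choose n large so that t = π/2 + n·(2π) exceeds log N / ν
  obtain ⟨n, hn⟩ := exists_nat_gt ((Real.log N / ν) / (2 * π))
  set t : ℝ := π / 2 + n * (2 * π) with ht
  have hπ : (0:ℝ) < π := Real.pi_pos
  have htpos : 0 < t := by positivity
  have hcos : Real.cos t = 0 := by
    rw [ht, Real.cos_add_nat_mul_two_pi, Real.cos_pi_div_two]
  have key := h t 0 1 le_rfl htpos.le
  rw [hcos] at key
  simp only [abs_one, mul_one, zero_mul, mul_zero, zero_sub, neg_zero, zero_pow,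
    Real.exp_zero, sub_zero] at key
  -- key : exp 0 ≤ N * 1 * exp (-ν * t)  (after simplification)
  have ht_big : Real.log N / ν < t := by
    have h1 : Real.log N / ν < n * (2 * π) := by
      have := (div_lt_iff₀ (by positivity : (0:ℝ) < 2 * π)).mp hn
      linarith
    linarith [half_pos hπ]
  have h2 : Real.log N < ν * t := by
    rw [div_lt_iff₀ hν] at ht_big; linarith
  have h3 : N < Real.exp (ν * t) := by
    calc N = Real.exp (Real.log N) := (Real.exp_log (by linarith)).symm
    _ < Real.exp (ν * t) := Real.exp_lt_exp.mpr h2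
  have h4 : N * Real.exp (-ν * t) < 1 := by
    rw [neg_mul, Real.exp_neg, ← div_eq_mul_inv, div_lt_one (Real.exp_pos _)]
    exact h3
  have key' : (1:ℝ) ≤ N * Real.exp (-ν * t) := by
    simpa using key
  linarith
end

section
/- (Datko-type necessity.) Let U be an evolution family with exponential dichotomy: there exist a compatible projection valued function P(·) and constants N1, N2 ≥ 1, α1, α2 ≥ 0, ν1, ν2 > 0 with α2 < ν2 such that ||U_P(t,s)x|| ≤ N1 e^{α1 s} e^{-ν1(t-s)}||x|| for x ∈ P(s)X and ||U_Q(s,t)x|| ≤ N2 e^{α2 t} e^{-ν2(t-s)}||x|| for x ∈ Q(t)X, t ≥ s ≥ 0. Then for every p > 0 there exist K ≥ 1, γ > 0, β ≥ 0 such that for all t ≥ 0 and x ∈ X: ∫_t^∞ e^{pγ(τ-t)} ||U_P(τ,t)x||^p dτ + ∫_0^t e^{pγ(t-τ)} ||U_Q(τ,t)x||^p dτ ≤ K e^{pβt} (||P(t)x||^p + ||Q(t)x||^p). One may take β = max{α1,α2}, any γ ∈ (0, min{ν1,ν2}), and K = max{(N1^p + N2^p)/(p(ν-γ)), 1} with ν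 = min{ν1,ν2}. -/
open Real MeasureTheory Filter

/-- An evolution family of bounded linear operators on a Banach space `X`:
`U(t,t) = Id`, `U(t,s)U(s,t₀) = U(t,t₀)` for `t ≥ s ≥ t₀ ≥ 0`, and `(t,s) ↦ U(t,s)x`
is continuous for every `x`. -/
structure EvolutionFamily (X : Type*) [NormedAddCommGroup X] [NormedSpace ℝ X] where
  U : ℝ → ℝ → X →L[ℝ] X
  map_id : ∀ t : ℝ, U t t = ContinuousLinearMap.id ℝ X
  map_comp : ∀ {t s t₀ : ℝ}, 0 ≤ t₀ → t₀ ≤ s → s ≤ t → (U t s).comp (U s t₀) = U t t₀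
  cont : ∀ x : X, Continuous fun p : ℝ × ℝ => U p.1 p.2 x

/-- A projection valued function `P(·)` compatible with the evolution family `E`, with
growth constants `M ≥ 1`, `ε ≥ 0`, `ω > 0` (Definition 3 of the paper).  Here
`Q(t) x = x - P(t) x` is the complementary projection and `UQ s t` is the inverse of the
isomorphism `U(t,s) : Q(s)X → Q(t)X`, identified with `UQ s t ∘ Q(t)` on all of `X`. -/
structure Compatible {X : Type*} [NormedAddCommGroup X] [NormedSpace ℝ X]
    (E : EvolutionFamily X) (M ε ω : ℝ) where
  P : ℝ → X →L[ℝ] X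
  UQ : ℝ → ℝ → X →L[ℝ] X
  idem : ∀ t : ℝ, (P t).comp (P t) = P t
  contP : ∀ x : X, Continuous fun t : ℝ => P t x
  comm : ∀ {t s : ℝ}, 0 ≤ s → s ≤ t → (P t).comp (E.U t s) = (E.U t s).comp (P s)
  hM : 1 ≤ M
  hε : 0 ≤ ε
  hω : 0 < ω
  UQ_range : ∀ {t s : ℝ} (x : X), 0 ≤ s → s ≤ t → P s (UQ s t x) = 0
  UQ_proj : ∀ {t s : ℝ} (x : X), 0 ≤ s → s ≤ t → UQ s t (x - P t x) = UQ s t x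
  right_inv : ∀ {t s : ℝ} (x : X), 0 ≤ s → s ≤ t → E.U t s (UQ s t x) = x - P t x
  left_inv : ∀ {t s : ℝ} (x : X), 0 ≤ s → s ≤ t → UQ s t (E.U t s (x - P s x)) = x - P s x
  growP : ∀ {t s : ℝ} (x : X), 0 ≤ s → s ≤ t →
    ‖E.U t s (P s x)‖ ≤ M * Real.exp (ε * s) * Real.exp (ω * (t - s)) * ‖P s x‖
  growQ : ∀ {t s : ℝ} (x : X), 0 ≤ s → s ≤ t →
    ‖UQ s t (x - P t x)‖ ≤ M * Real.exp (ε * s) * Real.exp (ω * (t - s)) * ‖x - P t x‖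

lemma exp_decay_intOn (c t : ℝ) (hc : 0 < c) :
    MeasureTheory.IntegrableOn (fun τ => Real.exp (-c * (τ - t))) (Set.Ioi t) := by
  have h : (fun τ => Real.exp (-c * (τ - t)))
      = fun τ => Real.exp (c * t) * Real.exp (-c * τ) := by
    funext τ; rw [← Real.exp_add]; ring_nf
  rw [h]
  exact (exp_neg_integrableOn_Ioi t hc).const_mul _

lemma exp_decay_integral_Ioi (c t : ℝ) (hc : 0 < c) :
    ∫ τ in Set.Ioi t, Real.exp (-c * (τ - t)) = 1 / c := by
  have h : (fun τ => Real.exp (-c * (τ - t)))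
      = fun τ => Real.exp (c * t) * Real.exp (-(c * τ)) := by
    funext τ; rw [← Real.exp_add]; ring_nf
  rw [h, MeasureTheory.integral_const_mul,
    MeasureTheory.integral_comp_mul_left_Ioi (fun x => Real.exp (-x)) t hc,
    integral_exp_neg_Ioi]
  rw [smul_eq_mul]
  rw [show Real.exp (c*t) * (c⁻¹ * Real.exp (-(c*t)))
      = c⁻¹ * (Real.exp (c*t) * Real.exp (-(c*t))) from by ring, ← Real.exp_add]
  simp [one_div]

lemma exp_decay_integral_Ioc (c t : ℝ) (hc : 0 < c) :
    ∫ τ in (0:ℝ)..t, Real.exp (-c * (t - τ)) ≤ 1 / c := by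
  have h : ∀ τ, Real.exp (-c * (t - τ)) = Real.exp (-(c * t)) * Real.exp (c * τ) := by
    intro τ; rw [← Real.exp_add]; ring_nf
  simp_rw [h]
  rw [intervalIntegral.integral_const_mul,
    intervalIntegral.integral_comp_mul_left (fun τ => Real.exp τ) hc.ne',
    mul_zero, integral_exp, smul_eq_mul]
  have h1 := Real.exp_pos (-(c * t))
  have h2 : Real.exp (-(c * t)) * Real.exp (c * t) = 1 := by
    rw [← Real.exp_add]; simp
  have h3 : (0:ℝ) < c⁻¹ := by positivity
  calc Real.exp (-(c*t)) * (c⁻¹ * (Real.exp (c*t) - Real.exp 0))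
      = c⁻¹ * (1 - Real.exp (-(c*t))) := by rw [Real.exp_zero]; nlinarith [h2]
    _ ≤ 1 / c := by rw [one_div]; nlinarith [h1, h3]

set_option maxHeartbeats 800000 in
/-- **Datko-type necessity** (Proposition 1 of the paper).  If the evolution family `E`
admits an exponential dichotomy with dichotomy projection `P(·)` (compatible with `E`),
then for every `p > 0` there exist `K ≥ 1`, `γ > 0`, `β ≥ 0` such that for all `t ≥ 0`
and `x ∈ X`:
`∫_t^∞ e^{pγ(τ-t)} ‖U_P(τ,t)x‖^p dτ + ∫_0^t e^{pγ(t-τ)} ‖U_Q(τ,t)x‖^p dτ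
  ≤ K e^{pβt} (‖P(t)x‖^p + ‖Q(t)x‖^p)`. -/
theorem stmt_6 {X : Type*} [NormedAddCommGroup X] [NormedSpace ℝ X] [CompleteSpace X]
    (E : EvolutionFamily X) (M ε ω : ℝ) (C : Compatible E M ε ω)
    (N₁ N₂ α₁ α₂ ν₁ ν₂ : ℝ) (hN₁ : 1 ≤ N₁) (hN₂ : 1 ≤ N₂) (hα₁ : 0 ≤ α₁) (hα₂ : 0 ≤ α₂)
    (hν₁ : 0 < ν₁) (hν₂ : 0 < ν₂) (hαν : α₂ < ν₂)
    (hP : ∀ {t s : ℝ} (x : X), 0 ≤ s → s ≤ t →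
      ‖E.U t s (C.P s x)‖ ≤ N₁ * Real.exp (α₁ * s) * Real.exp (-ν₁ * (t - s)) * ‖C.P s x‖)
    (hQ : ∀ {t s : ℝ} (x : X), 0 ≤ s → s ≤ t →
      ‖C.UQ s t (x - C.P t x)‖ ≤
        N₂ * Real.exp (α₂ * t) * Real.exp (-ν₂ * (t - s)) * ‖x - C.P t x‖)
    (p : ℝ) (hp : 0 < p) :
    ∃ K γ β : ℝ, 1 ≤ K ∧ 0 < γ ∧ 0 ≤ β ∧
      ∀ (t : ℝ) (x : X), 0 ≤ t →
        (∫ τ in Set.Ioi t, Real.exp (p * γ * (τ - t)) * ‖E.U τ t (C.P t x)‖ ^ p) +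
          (∫ τ in (0:ℝ)..t, Real.exp (p * γ * (t - τ)) * ‖C.UQ τ t (x - C.P t x)‖ ^ p) ≤
          K * Real.exp (p * β * t) * (‖C.P t x‖ ^ p + ‖x - C.P t x‖ ^ p) := by
  have hN₁0 : (0:ℝ) ≤ N₁ := le_trans zero_le_one hN₁
  have hN₂0 : (0:ℝ) ≤ N₂ := le_trans zero_le_one hN₂
  set γ : ℝ := min ν₁ ν₂ / 2 with hγdef
  have hγ : 0 < γ := by have := lt_min hν₁ hν₂; positivity
  have hγν₁ : γ < ν₁ := lt_of_le_of_lt (by rw [hγdef]; linarith [min_le_left ν₁ ν₂]) (by linarith : ν₁ / 2 < ν₁)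
  have hγν₂ : γ < ν₂ := lt_of_le_of_lt (by rw [hγdef]; linarith [min_le_right ν₁ ν₂]) (by linarith : ν₂ / 2 < ν₂)
  set c₁ : ℝ := p * (ν₁ - γ) with hc₁def
  set c₂ : ℝ := p * (ν₂ - γ) with hc₂def
  have hc₁ : 0 < c₁ := by have := sub_pos.2 hγν₁; positivity
  have hc₂ : 0 < c₂ := by have := sub_pos.2 hγν₂; positivity
  set β : ℝ := max α₁ α₂ with hβdef
  have hβ : 0 ≤ β := le_trans hα₁ (le_max_left _ _)
  set K : ℝ := N₁ ^ p / c₁ + N₂ ^ p / c₂ + 1 with hKdef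
  have hA : 0 ≤ N₁ ^ p / c₁ := by positivity
  have hB : 0 ≤ N₂ ^ p / c₂ := by positivity
  refine ⟨K, γ, β, by rw [hKdef]; linarith, hγ, hβ, ?_⟩
  intro t x ht
  set PX := C.P t x with hPX
  set QX := x - C.P t x with hQX
  -- pointwise bound on Ioi t
  have hbd₁ : ∀ τ ∈ Set.Ioi t,
      Real.exp (p * γ * (τ - t)) * ‖E.U τ t PX‖ ^ p
        ≤ (N₁ ^ p * Real.exp (p * α₁ * t) * ‖PX‖ ^ p) * Real.exp (-c₁ * (τ - t)) := by
    intro τ hτ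
    have hτ' : t ≤ τ := le_of_lt hτ
    have h0 : ‖E.U τ t PX‖ ≤ N₁ * Real.exp (α₁ * t) * Real.exp (-ν₁ * (τ - t)) * ‖PX‖ :=
      hP x ht hτ'
    have h1 : ‖E.U τ t PX‖ ^ p
        ≤ (N₁ * Real.exp (α₁ * t) * Real.exp (-ν₁ * (τ - t)) * ‖PX‖) ^ p :=
      Real.rpow_le_rpow (norm_nonneg _) h0 hp.le
    have h2 : (N₁ * Real.exp (α₁ * t) * Real.exp (-ν₁ * (τ - t)) * ‖PX‖) ^ p
        = N₁ ^ p * Real.exp (α₁ * t * p) * Real.exp (-ν₁ * (τ - t) * p) * ‖PX‖ ^ p := by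
      rw [Real.mul_rpow (by positivity) (norm_nonneg _),
        Real.mul_rpow (by positivity) (Real.exp_pos _).le,
        Real.mul_rpow hN₁0 (Real.exp_pos _).le, ← Real.exp_mul, ← Real.exp_mul]
    have h3 : Real.exp (p * γ * (τ - t)) * Real.exp (-ν₁ * (τ - t) * p)
        = Real.exp (-c₁ * (τ - t)) := by
      rw [← Real.exp_add, hc₁def]; ring_nf
    calc Real.exp (p * γ * (τ - t)) * ‖E.U τ t PX‖ ^ p
        ≤ Real.exp (p * γ * (τ - t))
            * (N₁ ^ p * Real.exp (α₁ * t * p) * Real.exp (-ν₁ * (τ - t) * p) * ‖PX‖ ^ p) := by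
          rw [← h2]; exact mul_le_mul_of_nonneg_left h1 (Real.exp_pos _).le
      _ = (N₁ ^ p * Real.exp (p * α₁ * t) * ‖PX‖ ^ p)
            * (Real.exp (p * γ * (τ - t)) * Real.exp (-ν₁ * (τ - t) * p)) := by
          rw [show α₁ * t * p = p * α₁ * t from by ring]; ring
      _ = _ := by rw [h3]
  -- integrability of the majorant and of the integrand on Ioi t
  have hg₁int : MeasureTheory.IntegrableOn
      (fun τ => (N₁ ^ p * Real.exp (p * α₁ * t) * ‖PX‖ ^ p) * Real.exp (-c₁ * (τ - t)))
      (Set.Ioi t) := (exp_decay_intOn c₁ t hc₁).const_mul _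
  have hcontf₁ : Continuous fun τ : ℝ => Real.exp (p * γ * (τ - t)) * ‖E.U τ t PX‖ ^ p := by
    have hU : Continuous fun τ : ℝ => E.U τ t PX :=
      (E.cont PX).comp (continuous_id.prodMk continuous_const)
    exact (Real.continuous_exp.comp (continuous_const.mul (continuous_id.sub continuous_const))).mul
      ((hU.norm).rpow_const (fun τ => Or.inr hp.le))
  have hf₁int : MeasureTheory.IntegrableOn
      (fun τ => Real.exp (p * γ * (τ - t)) * ‖E.U τ t PX‖ ^ p) (Set.Ioi t) := by
    refine hg₁int.mono' (hcontf₁.aestronglyMeasurable.restrict) ?_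
    refine (MeasureTheory.ae_restrict_iff' measurableSet_Ioi).2 (Filter.Eventually.of_forall ?_)
    intro τ hτ
    rw [Real.norm_eq_abs, abs_of_nonneg (by positivity)]
    exact hbd₁ τ hτ
  have hI₁ : (∫ τ in Set.Ioi t, Real.exp (p * γ * (τ - t)) * ‖E.U τ t PX‖ ^ p)
      ≤ (N₁ ^ p * Real.exp (p * α₁ * t) * ‖PX‖ ^ p) / c₁ := by
    calc (∫ τ in Set.Ioi t, Real.exp (p * γ * (τ - t)) * ‖E.U τ t PX‖ ^ p)
        ≤ ∫ τ in Set.Ioi t,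
            (N₁ ^ p * Real.exp (p * α₁ * t) * ‖PX‖ ^ p) * Real.exp (-c₁ * (τ - t)) :=
          MeasureTheory.setIntegral_mono_on hf₁int hg₁int measurableSet_Ioi hbd₁
      _ = (N₁ ^ p * Real.exp (p * α₁ * t) * ‖PX‖ ^ p) * (1 / c₁) := by
          rw [MeasureTheory.integral_const_mul, exp_decay_integral_Ioi c₁ t hc₁]
      _ = _ := by ring
  -- second integral
  have hbd₂ : ∀ τ ∈ Set.Icc (0:ℝ) t,
      Real.exp (p * γ * (t - τ)) * ‖C.UQ τ t QX‖ ^ p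
        ≤ (N₂ ^ p * Real.exp (p * α₂ * t) * ‖QX‖ ^ p) * Real.exp (-c₂ * (t - τ)) := by
    intro τ hτ
    have h0 : ‖C.UQ τ t QX‖ ≤ N₂ * Real.exp (α₂ * t) * Real.exp (-ν₂ * (t - τ)) * ‖QX‖ :=
      hQ x hτ.1 hτ.2
    have h1 : ‖C.UQ τ t QX‖ ^ p
        ≤ (N₂ * Real.exp (α₂ * t) * Real.exp (-ν₂ * (t - τ)) * ‖QX‖) ^ p :=
      Real.rpow_le_rpow (norm_nonneg _) h0 hp.le
    have h2 : (N₂ * Real.exp (α₂ * t) * Real.exp (-ν₂ * (t - τ)) * ‖QX‖) ^ p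
        = N₂ ^ p * Real.exp (α₂ * t * p) * Real.exp (-ν₂ * (t - τ) * p) * ‖QX‖ ^ p := by
      rw [Real.mul_rpow (by positivity) (norm_nonneg _),
        Real.mul_rpow (by positivity) (Real.exp_pos _).le,
        Real.mul_rpow hN₂0 (Real.exp_pos _).le, ← Real.exp_mul, ← Real.exp_mul]
    have h3 : Real.exp (p * γ * (t - τ)) * Real.exp (-ν₂ * (t - τ) * p)
        = Real.exp (-c₂ * (t - τ)) := by
      rw [← Real.exp_add, hc₂def]; ring_nf
    calc Real.exp (p * γ * (t - τ)) * ‖C.UQ τ t QX‖ ^ p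
        ≤ Real.exp (p * γ * (t - τ))
            * (N₂ ^ p * Real.exp (α₂ * t * p) * Real.exp (-ν₂ * (t - τ) * p) * ‖QX‖ ^ p) := by
          rw [← h2]; exact mul_le_mul_of_nonneg_left h1 (Real.exp_pos _).le
      _ = (N₂ ^ p * Real.exp (p * α₂ * t) * ‖QX‖ ^ p)
            * (Real.exp (p * γ * (t - τ)) * Real.exp (-ν₂ * (t - τ) * p)) := by
          rw [show α₂ * t * p = p * α₂ * t from by ring]; ring
      _ = _ := by rw [h3]
  have hI₂ : (∫ τ in (0:ℝ)..t, Real.exp (p * γ * (t - τ)) * ‖C.UQ τ t QX‖ ^ p)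
      ≤ (N₂ ^ p * Real.exp (p * α₂ * t) * ‖QX‖ ^ p) / c₂ := by
    by_cases hint : IntervalIntegrable
        (fun τ => Real.exp (p * γ * (t - τ)) * ‖C.UQ τ t QX‖ ^ p) volume 0 t
    · have hg₂int : IntervalIntegrable
          (fun τ => (N₂ ^ p * Real.exp (p * α₂ * t) * ‖QX‖ ^ p) * Real.exp (-c₂ * (t - τ)))
          volume 0 t := by
        have hc : Continuous fun τ : ℝ => Real.exp (-c₂ * (t - τ)) :=
          Real.continuous_exp.comp (continuous_const.mul (continuous_const.sub continuous_id))
        exact (continuous_const.mul hc).intervalIntegrable _ _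
      calc (∫ τ in (0:ℝ)..t, Real.exp (p * γ * (t - τ)) * ‖C.UQ τ t QX‖ ^ p)
          ≤ ∫ τ in (0:ℝ)..t,
              (N₂ ^ p * Real.exp (p * α₂ * t) * ‖QX‖ ^ p) * Real.exp (-c₂ * (t - τ)) :=
            intervalIntegral.integral_mono_on ht hint hg₂int hbd₂
        _ = (N₂ ^ p * Real.exp (p * α₂ * t) * ‖QX‖ ^ p)
              * ∫ τ in (0:ℝ)..t, Real.exp (-c₂ * (t - τ)) :=
            intervalIntegral.integral_const_mul _ _
        _ ≤ (N₂ ^ p * Real.exp (p * α₂ * t) * ‖QX‖ ^ p) * (1 / c₂) :=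
            mul_le_mul_of_nonneg_left (exp_decay_integral_Ioc c₂ t hc₂) (by positivity)
        _ = _ := by ring
    · rw [intervalIntegral.integral_undef hint]
      positivity
  -- combine
  have hexp₁ : Real.exp (p * α₁ * t) ≤ Real.exp (p * β * t) := by
    apply Real.exp_le_exp.2
    have h : α₁ ≤ β := le_max_left _ _
    exact mul_le_mul_of_nonneg_right (mul_le_mul_of_nonneg_left h hp.le) ht
  have hexp₂ : Real.exp (p * α₂ * t) ≤ Real.exp (p * β * t) := by
    apply Real.exp_le_exp.2
    have h : α₂ ≤ β := le_max_right _ _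
    exact mul_le_mul_of_nonneg_right (mul_le_mul_of_nonneg_left h hp.le) ht
  have hPn : (0:ℝ) ≤ ‖PX‖ ^ p := Real.rpow_nonneg (norm_nonneg _) p
  have hQn : (0:ℝ) ≤ ‖QX‖ ^ p := Real.rpow_nonneg (norm_nonneg _) p
  have hS₁ : ‖PX‖ ^ p ≤ ‖PX‖ ^ p + ‖QX‖ ^ p := by linarith
  have hS₂ : ‖QX‖ ^ p ≤ ‖PX‖ ^ p + ‖QX‖ ^ p := by linarith
  calc (∫ τ in Set.Ioi t, Real.exp (p * γ * (τ - t)) * ‖E.U τ t PX‖ ^ p)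
        + (∫ τ in (0:ℝ)..t, Real.exp (p * γ * (t - τ)) * ‖C.UQ τ t QX‖ ^ p)
      ≤ (N₁ ^ p * Real.exp (p * α₁ * t) * ‖PX‖ ^ p) / c₁
          + (N₂ ^ p * Real.exp (p * α₂ * t) * ‖QX‖ ^ p) / c₂ := add_le_add hI₁ hI₂
    _ = (N₁ ^ p / c₁) * (Real.exp (p * α₁ * t) * ‖PX‖ ^ p)
          + (N₂ ^ p / c₂) * (Real.exp (p * α₂ * t) * ‖QX‖ ^ p) := by ring
    _ ≤ (N₁ ^ p / c₁) * (Real.exp (p * β * t) * (‖PX‖ ^ p + ‖QX‖ ^ p))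
          + (N₂ ^ p / c₂) * (Real.exp (p * β * t) * (‖PX‖ ^ p + ‖QX‖ ^ p)) := by
        gcongr
    _ = (N₁ ^ p / c₁ + N₂ ^ p / c₂) * Real.exp (p * β * t) * (‖PX‖ ^ p + ‖QX‖ ^ p) := by ring
    _ ≤ K * Real.exp (p * β * t) * (‖PX‖ ^ p + ‖QX‖ ^ p) := by
        have hKle : N₁ ^ p / c₁ + N₂ ^ p / c₂ ≤ K := by rw [hKdef]; linarith
        have : (0:ℝ) ≤ Real.exp (p * β * t) * (‖PX‖ ^ p + ‖QX‖ ^ p) := by positivity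
        nlinarith
end

section
/- (Datko-type theorem, unstable part.) Let U be an evolution family and P(·) a compatible projection valued function with constants M ≥ 1, ε ≥ 0, ω > 0. Suppose there exist p > 0, K ≥ 1, γ > ε and β ∈ [0,γ) such that ∫_0^t e^{pγ(t-τ)} ||U_Q(τ,t)x||^p dτ ≤ K e^{pβt} ||x||^p for all t ≥ 0 and x ∈ Q(t)X. Then there exists N2 ≥ 1 such that ||U_Q(s,t)x|| ≤ N2 e^{(β+ε)t} e^{-(γ+ε)(t-s)} ||x|| for all t ≥ s ≥ 0 and x ∈ Q(t)X. -/
open Real MeasureTheory Filter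

section Aux

variable {X : Type*} [NormedAddCommGroup X] [NormedSpace ℝ X]
  {E : EvolutionFamily X} {M ε ω : ℝ}

lemma P_idem_apply (C : Compatible E M ε ω) (t : ℝ) (x : X) :
    C.P t (C.P t x) = C.P t x := by
  have h := congrArg (fun f : X →L[ℝ] X => f x) (C.idem t)
  simpa using h

lemma P_Q_zero (C : Compatible E M ε ω) (t : ℝ) (x : X) :
    C.P t (x - C.P t x) = 0 := by
  simp [map_sub, P_idem_apply C t x]

lemma UQ_semiflow (C : Compatible E M ε ω) {a b t : ℝ} (y : X)
    (ha : 0 ≤ a) (hab : a ≤ b) (hbt : b ≤ t) (hy : C.P t y = 0) :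
    E.U b a (C.UQ a t y) = C.UQ b t y := by
  have hat : a ≤ t := hab.trans hbt
  have hPw : C.P a (C.UQ a t y) = 0 := C.UQ_range y ha hat
  have hPz : C.P b (E.U b a (C.UQ a t y)) = 0 := by
    have h := congrArg (fun f : X →L[ℝ] X => f (C.UQ a t y)) (C.comm ha hab)
    simpa [hPw] using h
  have hUz : E.U t b (E.U b a (C.UQ a t y)) = y := by
    have h := congrArg (fun f : X →L[ℝ] X => f (C.UQ a t y)) (E.map_comp ha hab hbt)
    have h2 := C.right_inv y ha hat
    rw [hy, sub_zero] at h2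
    simpa [h2] using h
  have h3 := C.left_inv (E.U b a (C.UQ a t y)) (ha.trans hab) hbt
  rw [hPz, sub_zero, hUz] at h3
  exact h3.symm

lemma UQ_cocycle (C : Compatible E M ε ω) {s τ t : ℝ} (y : X)
    (hs : 0 ≤ s) (hsτ : s ≤ τ) (hτt : τ ≤ t) (hy : C.P t y = 0) :
    C.UQ s τ (C.UQ τ t y) = C.UQ s t y := by
  have hst : s ≤ t := hsτ.trans hτt
  have hPw : C.P s (C.UQ s t y) = 0 := C.UQ_range y hs hst
  have h1 : E.U τ s (C.UQ s t y) = C.UQ τ t y := UQ_semiflow C y hs hsτ hτt hy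
  have h2 := C.left_inv (C.UQ s t y) hs hsτ
  rw [hPw, sub_zero, h1] at h2
  exact h2

lemma norm_UQ_le (C : Compatible E M ε ω) {s τ t : ℝ} (y : X)
    (hs : 0 ≤ s) (hsτ : s ≤ τ) (hτt : τ ≤ t) (hy : C.P t y = 0) :
    ‖C.UQ s t y‖ ≤ M * Real.exp (ε * s) * Real.exp (ω * (τ - s)) * ‖C.UQ τ t y‖ := by
  have hPz : C.P τ (C.UQ τ t y) = 0 := C.UQ_range y (hs.trans hsτ) hτt
  have h := C.growQ (C.UQ τ t y) hs hsτ
  rw [hPz, sub_zero, UQ_cocycle C y hs hsτ hτt hy] at h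
  exact h

lemma UQ_self (C : Compatible E M ε ω) {t : ℝ} (y : X) (ht : 0 ≤ t)
    (hy : C.P t y = 0) : C.UQ t t y = y := by
  have h := C.left_inv y ht le_rfl
  rw [hy, sub_zero, E.map_id] at h
  simpa using h

end Aux

set_option maxHeartbeats 1000000

/-- **Datko-type theorem, unstable part.**  Let `E` be an evolution family and `P(·)` a
compatible projection valued function with constants `M ≥ 1`, `ε ≥ 0`, `ω > 0`.  If there
exist `p > 0`, `K ≥ 1`, `γ > ε` and `β ∈ [0,γ)` such that
`∫_0^t e^{pγ(t-τ)} ‖U_Q(τ,t)x‖^p dτ ≤ K e^{pβt} ‖x‖^p` for all `t ≥ 0` and `x ∈ Q(t)X`,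
then there exists `N₂ ≥ 1` with
`‖U_Q(s,t)x‖ ≤ N₂ e^{(β+ε)t} e^{-(γ+ε)(t-s)} ‖x‖` for all `t ≥ s ≥ 0`, `x ∈ Q(t)X`. -/
theorem stmt_8 {X : Type*} [NormedAddCommGroup X] [NormedSpace ℝ X] [CompleteSpace X]
    (E : EvolutionFamily X) (M ε ω : ℝ) (C : Compatible E M ε ω)
    (p K γ β : ℝ) (hp : 0 < p) (hK : 1 ≤ K) (hγ : ε < γ) (hβ0 : 0 ≤ β) (hβγ : β < γ)
    (hDatko : ∀ (t : ℝ) (x : X), 0 ≤ t →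
      (∫ τ in (0:ℝ)..t, Real.exp (p * γ * (t - τ)) * ‖C.UQ τ t (x - C.P t x)‖ ^ p) ≤
        K * Real.exp (p * β * t) * ‖x - C.P t x‖ ^ p) :
    ∃ N₂ : ℝ, 1 ≤ N₂ ∧ ∀ (t s : ℝ) (x : X), 0 ≤ s → s ≤ t →
      ‖C.UQ s t (x - C.P t x)‖ ≤
        N₂ * Real.exp ((β + ε) * t) * Real.exp (-(γ + ε) * (t - s)) * ‖x - C.P t x‖ := by
  have hγ0 : 0 < γ := lt_of_le_of_lt C.hε hγ
  have hωγ : 0 ≤ ω + γ := by linarith [C.hω]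
  have hKp : (1:ℝ) ≤ K ^ (1/p) := Real.one_le_rpow hK (by positivity)
  have hKp0 : 0 < K ^ (1/p) := lt_of_lt_of_le one_pos hKp
  have hM0 : (0:ℝ) < M := lt_of_lt_of_le one_pos C.hM
  refine ⟨M * Real.exp (ω + γ) * K ^ (1/p), ?_, ?_⟩
  · calc (1:ℝ) = 1 * 1 := by ring
      _ ≤ M * Real.exp (ω + γ) * K ^ (1/p) :=
          mul_le_mul (le_trans C.hM (by nlinarith [Real.one_le_exp hωγ]))
            hKp one_pos.le (by positivity)
  intro t s x hs hst
  have ht0 : 0 ≤ t := hs.trans hst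
  set y := x - C.P t x with hydef
  have hy : C.P t y = 0 := P_Q_zero C t x
  set N₂ := M * Real.exp (ω + γ) * K ^ (1/p) with hN2def
  have hN20 : 0 < N₂ := by positivity
  -- reduce the exponential factor
  have hexp : Real.exp ((β + ε) * t) * Real.exp (-(γ + ε) * (t - s)) =
      Real.exp (β * t + ε * s - γ * (t - s)) := by
    rw [← Real.exp_add]; ring_nf
  set R := Real.exp (β * t + ε * s - γ * (t - s)) with hRdef
  have hR0 : 0 < R := Real.exp_pos _
  have hgoal : N₂ * Real.exp ((β + ε) * t) * Real.exp (-(γ + ε) * (t - s)) * ‖y‖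
      = N₂ * R * ‖y‖ := by rw [mul_assoc N₂, hexp]
  rw [hgoal]
  rcases le_or_gt t (s + 1) with hcase | hcase
  · -- short interval: direct growth bound
    have h1 : ‖C.UQ s t y‖ ≤ M * Real.exp (ε * s) * Real.exp (ω * (t - s)) * ‖y‖ := by
      have := norm_UQ_le C y hs hst le_rfl hy
      rwa [UQ_self C y ht0 hy] at this
    have h2 : Real.exp (ε * s) * Real.exp (ω * (t - s)) ≤ Real.exp (ω + γ) * R := by
      rw [← Real.exp_add, ← Real.exp_add]
      apply Real.exp_le_exp.mpr
      have h3 : ω * (t - s) ≤ ω := by nlinarith [C.hω]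
      nlinarith [hβ0, ht0, hγ0, hst]
    calc ‖C.UQ s t y‖ ≤ M * Real.exp (ε * s) * Real.exp (ω * (t - s)) * ‖y‖ := h1
      _ = M * (Real.exp (ε * s) * Real.exp (ω * (t - s))) * ‖y‖ := by ring
      _ ≤ M * (Real.exp (ω + γ) * R) * ‖y‖ := by
          gcongr
      _ = M * Real.exp (ω + γ) * 1 * R * ‖y‖ := by ring
      _ ≤ M * Real.exp (ω + γ) * (K ^ (1/p)) * R * ‖y‖ := by gcongr
      _ = N₂ * R * ‖y‖ := by rw [hN2def]
  · -- long interval: use the Datko integral condition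
    have hs1t : s + 1 ≤ t := hcase.le
    set w₀ := C.UQ 0 t y with hw0
    have hEq : ∀ τ, 0 ≤ τ → τ ≤ t → E.U τ 0 w₀ = C.UQ τ t y := fun τ h0 h1 =>
      UQ_semiflow C y le_rfl h0 h1 hy
    set G : ℝ → ℝ := fun τ => Real.exp (p * γ * (t - τ)) * ‖E.U τ 0 w₀‖ ^ p with hGdef
    have hUcont : Continuous fun τ : ℝ => E.U τ 0 w₀ :=
      (E.cont w₀).comp (continuous_id.prodMk continuous_const)
    have hGcont : Continuous G := by
      apply Continuous.mul
      · exact Real.continuous_exp.comp (by continuity)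
      · rw [continuous_iff_continuousAt]
        intro τ
        exact (Real.continuousAt_rpow_const _ _ (Or.inr hp.le)).comp hUcont.norm.continuousAt
    have hGnn : ∀ τ, 0 ≤ G τ := fun τ =>
      mul_nonneg (Real.exp_pos _).le (Real.rpow_nonneg (norm_nonneg _) p)
    have hGint : ∀ a b : ℝ, IntervalIntegrable G volume a b := fun a b =>
      hGcont.intervalIntegrable a b
    -- the full integral is controlled by the Datko hypothesis
    have hfull : (∫ τ in (0:ℝ)..t, G τ) ≤ K * Real.exp (p * β * t) * ‖y‖ ^ p := by
      have hcongr : (∫ τ in (0:ℝ)..t, G τ)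
          = ∫ τ in (0:ℝ)..t, Real.exp (p * γ * (t - τ)) * ‖C.UQ τ t (x - C.P t x)‖ ^ p := by
        apply intervalIntegral.integral_congr
        intro τ hτ
        rw [Set.uIcc_of_le ht0] at hτ
        simp only [hGdef, ← hydef]
        rw [hEq τ hτ.1 hτ.2]
      rw [hcongr, hydef]
      exact hDatko t x ht0
    -- the integral over [s, s+1] is below the full integral
    have hsub : (∫ τ in s..(s+1), G τ) ≤ ∫ τ in (0:ℝ)..t, G τ :=
      intervalIntegral.integral_mono_interval hs (by linarith) hs1t
        (Filter.Eventually.of_forall hGnn) (hGint 0 t)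
    -- pointwise lower bound on [s, s+1]
    set A := M * Real.exp (ε * s) * Real.exp ω with hAdef
    have hA0 : 0 < A := by positivity
    have hlow : ∀ τ ∈ Set.Icc s (s+1), ‖C.UQ s t y‖ ≤ A * ‖E.U τ 0 w₀‖ := by
      intro τ hτ
      have hτt : τ ≤ t := le_trans hτ.2 hs1t
      have h1 := norm_UQ_le C y hs hτ.1 hτt hy
      rw [← hEq τ (hs.trans hτ.1) hτt] at h1
      have h2 : Real.exp (ω * (τ - s)) ≤ Real.exp ω := by
        apply Real.exp_le_exp.mpr
        nlinarith [C.hω, hτ.2]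
      calc ‖C.UQ s t y‖ ≤ M * Real.exp (ε * s) * Real.exp (ω * (τ - s)) * ‖E.U τ 0 w₀‖ := h1
        _ ≤ M * Real.exp (ε * s) * Real.exp ω * ‖E.U τ 0 w₀‖ := by gcongr
    set c := Real.exp (p * γ * (t - s - 1)) * (‖C.UQ s t y‖ / A) ^ p with hcdef
    have hpt : ∀ τ ∈ Set.Icc s (s+1), c ≤ G τ := by
      intro τ hτ
      have h1 : ‖C.UQ s t y‖ / A ≤ ‖E.U τ 0 w₀‖ := by
        rw [div_le_iff₀ hA0, mul_comm]
        exact hlow τ hτ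
      have h2 : (‖C.UQ s t y‖ / A) ^ p ≤ ‖E.U τ 0 w₀‖ ^ p :=
        Real.rpow_le_rpow (by positivity) h1 hp.le
      have h3 : Real.exp (p * γ * (t - s - 1)) ≤ Real.exp (p * γ * (t - τ)) := by
        apply Real.exp_le_exp.mpr
        have hτ2 : τ ≤ s + 1 := hτ.2
        have h0 : 0 ≤ p * γ := by positivity
        exact mul_le_mul_of_nonneg_left (by linarith) h0
      exact mul_le_mul h3 h2 (by positivity) (Real.exp_pos _).le
    have hc : c ≤ ∫ τ in s..(s+1), G τ := by
      have h := intervalIntegral.integral_mono_on (by linarith : s ≤ s + 1)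
        (intervalIntegrable_const) (hGint s (s+1)) hpt
      rwa [intervalIntegral.integral_const, show s + 1 - s = (1:ℝ) by ring, one_smul] at h
    have hkey : c ≤ K * Real.exp (p * β * t) * ‖y‖ ^ p := le_trans hc (le_trans hsub hfull)
    -- unravel the p-th powers
    have hexpp : ∀ a : ℝ, Real.exp a ^ p = Real.exp (a * p) := fun a => by
      rw [Real.rpow_def_of_pos (Real.exp_pos a), Real.log_exp]
    have hD : (‖C.UQ s t y‖ / A) ^ p ≤
        Real.exp (-(p * γ * (t - s - 1))) * (K * Real.exp (p * β * t) * ‖y‖ ^ p) := by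
      have h := mul_le_mul_of_nonneg_left hkey (Real.exp_pos (-(p * γ * (t - s - 1)))).le
      calc (‖C.UQ s t y‖ / A) ^ p
          = Real.exp (-(p * γ * (t - s - 1))) * c := by
            rw [hcdef, ← mul_assoc, ← Real.exp_add, neg_add_cancel, Real.exp_zero, one_mul]
        _ ≤ Real.exp (-(p * γ * (t - s - 1))) * (K * Real.exp (p * β * t) * ‖y‖ ^ p) := h
    set B := K ^ (1/p) * Real.exp (β * t) * Real.exp (-(γ * (t - s - 1))) * ‖y‖ with hBdef
    have hB0 : 0 ≤ B := by positivity
    have hBp : B ^ p = K * Real.exp (β * t) ^ p * Real.exp (-(γ * (t - s - 1))) ^ p * ‖y‖ ^ p := by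
      rw [hBdef, Real.mul_rpow (by positivity) (norm_nonneg y),
        Real.mul_rpow (by positivity) (Real.exp_pos _).le,
        Real.mul_rpow (by positivity) (Real.exp_pos _).le,
        ← Real.rpow_mul (by positivity : (0:ℝ) ≤ K), one_div_mul_cancel hp.ne', Real.rpow_one]
    have hDB : (‖C.UQ s t y‖ / A) ^ p ≤ B ^ p := by
      rw [hBp, hexpp, hexpp]
      calc (‖C.UQ s t y‖ / A) ^ p
          ≤ Real.exp (-(p * γ * (t - s - 1))) * (K * Real.exp (p * β * t) * ‖y‖ ^ p) := hD
        _ = K * Real.exp (β * t * p) * Real.exp (-(γ * (t - s - 1)) * p) * ‖y‖ ^ p := by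
            rw [show -(γ * (t - s - 1)) * p = -(p * γ * (t - s - 1)) by ring,
              show β * t * p = p * β * t by ring]
            ring
    have hDle : ‖C.UQ s t y‖ / A ≤ B :=
      (Real.rpow_le_rpow_iff (by positivity) hB0 hp).mp hDB
    have hfin : ‖C.UQ s t y‖ ≤ A * B := by
      rw [div_le_iff₀ hA0] at hDle
      linarith [hDle]
    have e1 : Real.exp (ε * s) * Real.exp ω * Real.exp (β * t) * Real.exp (-(γ * (t - s - 1)))
        = Real.exp (ω + γ) * Real.exp (β * t + ε * s - γ * (t - s)) := by
      rw [← Real.exp_add, ← Real.exp_add, ← Real.exp_add, ← Real.exp_add]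
      congr 1
      ring
    have hAB : A * B = N₂ * R * ‖y‖ := by
      calc A * B = M * (K ^ (1/p)) *
            (Real.exp (ε * s) * Real.exp ω * Real.exp (β * t) *
              Real.exp (-(γ * (t - s - 1)))) * ‖y‖ := by
            rw [hAdef, hBdef]; ring
        _ = M * (K ^ (1/p)) * (Real.exp (ω + γ) * Real.exp (β * t + ε * s - γ * (t - s)))
              * ‖y‖ := by rw [e1]
        _ = N₂ * R * ‖y‖ := by rw [hN2def, hRdef]; ring
    calc ‖C.UQ s t y‖ ≤ A * B := hfin
      _ = N₂ * R * ‖y‖ := hAB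
end

section
/- (Lyapunov sufficiency.) Let U be an evolution family and P(·) a compatible projection valued function with constants M ≥ 1, ε ≥ 0, ω > 0. Suppose there exist K ≥ 1, γ > ε and β ∈ [0,γ) such that for the specific choice H(t)x = e^{γt}P(t)x + e^{-γt}Q(t)x there is a continuous function L: R_+ × X → R with: (i) L(t,U(t,s)x) + ∫_s^t ||H(τ)U(τ,s)x||^2 dτ ≤ L(s,x) for all t ≥ s ≥ 0, x ∈ X; (ii) |L(t,x)| ≤ K(e^{2(γ+β)t}||P(t)x||^2 + e^{-2(γ-β)t}||Q(t)x||^2); (iii) L(t,P(t)x) ≥ 0 and L(t,Q(t)x) ≤ 0. Then the Datko estimate ∫_t^∞ e^{2γ(τ-t)}||U_P(τ,t)x||^2 dτ + ∫_0^t e^{2γ(t-τ)}||U_Q(τ,t)x||^2 dτ ≤ K e^{2βt}(||P(t)x||^2 + ||Q(t)x||^2) holds for all (t,x), and consequently U has an exponential dichotomy. -/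
open Real MeasureTheory Filter

section helpers

variable {X : Type*} [NormedAddCommGroup X] [NormedSpace ℝ X]
  {E : EvolutionFamily X} {M ε ω : ℝ} (C : Compatible E M ε ω)

lemma exp_mul_exp (a b c : ℝ) (h : a + b = c) : Real.exp a * Real.exp b = Real.exp c := by
  rw [← Real.exp_add, h]

lemma exp_sq (x : ℝ) : Real.exp x ^ 2 = Real.exp (2 * x) := by
  rw [sq, ← Real.exp_add]; ring_nf

lemma Pt_idem (t : ℝ) (x : X) : C.P t (C.P t x) = C.P t x := by
  simpa using DFunLike.congr_fun (C.idem t) x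

lemma commP {t s : ℝ} (hs : 0 ≤ s) (hst : s ≤ t) (x : X) :
    C.P t (E.U t s x) = E.U t s (C.P s x) := by
  simpa using DFunLike.congr_fun (C.comm hs hst) x

lemma Ucomp (E : EvolutionFamily X) {t s t₀ : ℝ} (h0 : 0 ≤ t₀) (h1 : t₀ ≤ s) (h2 : s ≤ t)
    (x : X) : E.U t s (E.U s t₀ x) = E.U t t₀ x := by
  simpa using DFunLike.congr_fun (E.map_comp h0 h1 h2) x

lemma PQ_zero (t : ℝ) (x : X) : C.P t (x - C.P t x) = 0 := by
  rw [map_sub, Pt_idem, sub_self]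

lemma contU (E : EvolutionFamily X) (s : ℝ) (x : X) : Continuous fun τ : ℝ => E.U τ s x :=
  (E.cont x).comp (continuous_id.prodMk continuous_const)

lemma UQ_evol {t s σ : ℝ} (h0 : 0 ≤ s) (h1 : s ≤ σ) (h2 : σ ≤ t) (x : X)
    (hx : C.P t x = 0) : E.U σ s (C.UQ s t x) = C.UQ σ t x := by
  set w := E.U σ s (C.UQ s t x) with hw
  have hPw : C.P σ w = 0 := by
    rw [hw, commP C h0 h1, C.UQ_range x h0 (h1.trans h2), map_zero]
  have hUw : E.U t σ w = x := by
    rw [hw, Ucomp E h0 h1 h2, C.right_inv x h0 (h1.trans h2), hx, sub_zero]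
  have h := C.left_inv w (h0.trans h1) h2
  rw [hPw, sub_zero, hUw] at h
  exact h.symm

lemma UQ_comp' {t s τ : ℝ} (h0 : 0 ≤ s) (h1 : s ≤ τ) (h2 : τ ≤ t) (q : X)
    (hq : C.P t q = 0) : C.UQ s τ (C.UQ τ t q) = C.UQ s t q := by
  set z := C.UQ τ t q with hz
  have hPz : C.P τ z = 0 := C.UQ_range q (h0.trans h1) h2
  set w := C.UQ s τ z with hwdef
  have hPw : C.P s w = 0 := C.UQ_range z h0 h1
  have hUτ : E.U τ s w = z := by
    have := C.right_inv z h0 h1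
    rw [← hwdef] at this
    rw [this, hPz, sub_zero]
  have hUt : E.U t s w = q := by
    rw [← Ucomp E h0 h1 h2, hUτ, hz]
    have := C.right_inv q (h0.trans h1) h2
    rw [this, hq, sub_zero]
  have h := C.left_inv w h0 (h1.trans h2)
  rw [hPw, sub_zero, hUt] at h
  exact h.symm

end helpers

section datko

variable {X : Type*} [NormedAddCommGroup X] [NormedSpace ℝ X]
  {E : EvolutionFamily X} {M ε ω : ℝ} (C : Compatible E M ε ω)
  {K γ β : ℝ} {H : ℝ → X →L[ℝ] X} {L : ℝ → X → ℝ}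

lemma datkoP
    (hH : ∀ (t : ℝ) (x : X),
      H t x = Real.exp (γ * t) • C.P t x + Real.exp (-γ * t) • (x - C.P t x))
    (hLyap : ∀ (t s : ℝ) (x : X), 0 ≤ s → s ≤ t →
      L t (E.U t s x) + (∫ τ in s..t, ‖H τ (E.U τ s x)‖ ^ 2) ≤ L s x)
    (hbound : ∀ (t : ℝ) (x : X), 0 ≤ t →
      |L t x| ≤ K * (Real.exp (2 * (γ + β) * t) * ‖C.P t x‖ ^ 2 +
        Real.exp (-2 * (γ - β) * t) * ‖x - C.P t x‖ ^ 2))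
    (hsign : ∀ (t : ℝ) (x : X), 0 ≤ t → 0 ≤ L t (C.P t x) ∧ L t (x - C.P t x) ≤ 0)
    (t s : ℝ) (x : X) (hs : 0 ≤ s) (hst : s ≤ t) :
    ∫ τ in s..t, Real.exp (2 * γ * (τ - s)) * ‖E.U τ s (C.P s x)‖ ^ 2 ≤
      K * Real.exp (2 * β * s) * ‖C.P s x‖ ^ 2 := by
  set p := C.P s x with hp
  have hPp : C.P s p = p := Pt_idem C s x
  have ht : 0 ≤ t := hs.trans hst
  -- sign of L at the endpoint
  have hLt : 0 ≤ L t (E.U t s p) := by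
    have h1 : C.P t (E.U t s p) = E.U t s p := by rw [commP C hs hst, hPp]
    have := (hsign t (E.U t s p) ht).1
    rwa [h1] at this
  -- bound on L s p
  have hLs : L s p ≤ K * (Real.exp (2 * (γ + β) * s) * ‖p‖ ^ 2) := by
    have hb := hbound s p hs
    rw [hPp, sub_self, norm_zero] at hb
    have := (le_abs_self (L s p)).trans hb
    simpa using this
  -- rewrite the Lyapunov integral
  have hIcongr : (∫ τ in s..t, ‖H τ (E.U τ s p)‖ ^ 2) =
      ∫ τ in s..t, Real.exp (2 * γ * τ) * ‖E.U τ s p‖ ^ 2 := by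
    apply intervalIntegral.integral_congr
    intro τ hτ
    dsimp only
    rw [Set.uIcc_of_le hst] at hτ
    have hPinv : C.P τ (E.U τ s p) = E.U τ s p := by rw [commP C hs hτ.1, hPp]
    rw [hH τ (E.U τ s p), hPinv, sub_self, smul_zero, add_zero, norm_smul,
      Real.norm_eq_abs, abs_of_pos (Real.exp_pos _), mul_pow, exp_sq]
    ring_nf
  have key := hLyap t s p hs hst
  rw [hIcongr] at key
  have hmain : (∫ τ in s..t, Real.exp (2 * γ * τ) * ‖E.U τ s p‖ ^ 2) ≤
      K * (Real.exp (2 * (γ + β) * s) * ‖p‖ ^ 2) := by linarith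
  -- pull out the constant exp(-2γs)
  have hre : (∫ τ in s..t, Real.exp (2 * γ * (τ - s)) * ‖E.U τ s p‖ ^ 2) =
      Real.exp (-(2 * γ * s)) * ∫ τ in s..t, Real.exp (2 * γ * τ) * ‖E.U τ s p‖ ^ 2 := by
    rw [← intervalIntegral.integral_const_mul]
    apply intervalIntegral.integral_congr
    intro τ _
    dsimp only
    rw [← mul_assoc, exp_mul_exp _ _ (2 * γ * (τ - s)) (by ring)]
  rw [hre]
  calc Real.exp (-(2 * γ * s)) * ∫ τ in s..t, Real.exp (2 * γ * τ) * ‖E.U τ s p‖ ^ 2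
      ≤ Real.exp (-(2 * γ * s)) * (K * (Real.exp (2 * (γ + β) * s) * ‖p‖ ^ 2)) :=
        mul_le_mul_of_nonneg_left hmain (Real.exp_pos _).le
    _ = K * (Real.exp (-(2 * γ * s)) * Real.exp (2 * (γ + β) * s)) * ‖p‖ ^ 2 := by ring
    _ = K * Real.exp (2 * β * s) * ‖p‖ ^ 2 := by
        rw [exp_mul_exp _ _ (2 * β * s) (by ring)]

lemma datkoQ
    (hH : ∀ (t : ℝ) (x : X),
      H t x = Real.exp (γ * t) • C.P t x + Real.exp (-γ * t) • (x - C.P t x))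
    (hLyap : ∀ (t s : ℝ) (x : X), 0 ≤ s → s ≤ t →
      L t (E.U t s x) + (∫ τ in s..t, ‖H τ (E.U τ s x)‖ ^ 2) ≤ L s x)
    (hbound : ∀ (t : ℝ) (x : X), 0 ≤ t →
      |L t x| ≤ K * (Real.exp (2 * (γ + β) * t) * ‖C.P t x‖ ^ 2 +
        Real.exp (-2 * (γ - β) * t) * ‖x - C.P t x‖ ^ 2))
    (hsign : ∀ (t : ℝ) (x : X), 0 ≤ t → 0 ≤ L t (C.P t x) ∧ L t (x - C.P t x) ≤ 0)
    (t : ℝ) (x : X) (ht : 0 ≤ t) :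
    ∫ τ in (0:ℝ)..t, Real.exp (2 * γ * (t - τ)) * ‖C.UQ τ t (x - C.P t x)‖ ^ 2 ≤
      K * Real.exp (2 * β * t) * ‖x - C.P t x‖ ^ 2 := by
  set q := x - C.P t x with hq
  have hPq : C.P t q = 0 := PQ_zero C t x
  set y0 := C.UQ 0 t q with hy0
  have hPy0 : C.P 0 y0 = 0 := C.UQ_range q le_rfl ht
  have hU0 : E.U t 0 y0 = q := by
    rw [hy0, C.right_inv q le_rfl ht, hPq, sub_zero]
  have hLt : -(K * (Real.exp (-2 * (γ - β) * t) * ‖q‖ ^ 2)) ≤ L t q := by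
    have hb := hbound t q ht
    rw [hPq, norm_zero] at hb
    have hb' : |L t q| ≤ K * (Real.exp (-2 * (γ - β) * t) * ‖q‖ ^ 2) := by
      simpa using hb
    have := (abs_le.mp hb').1
    simpa using this
  have hL0 : L 0 y0 ≤ 0 := by
    have := (hsign 0 y0 le_rfl).2
    rwa [hPy0, sub_zero] at this
  have hIcongr : (∫ τ in (0:ℝ)..t, ‖H τ (E.U τ 0 y0)‖ ^ 2) =
      ∫ τ in (0:ℝ)..t, Real.exp (-(2 * γ * τ)) * ‖E.U τ 0 y0‖ ^ 2 := by
    apply intervalIntegral.integral_congr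
    intro τ hτ
    dsimp only
    rw [Set.uIcc_of_le ht] at hτ
    have hPUy : C.P τ (E.U τ 0 y0) = 0 := by
      rw [commP C le_rfl hτ.1, hPy0, map_zero]
    rw [hH τ (E.U τ 0 y0), hPUy, smul_zero, zero_add, sub_zero, norm_smul,
      Real.norm_eq_abs, abs_of_pos (Real.exp_pos _), mul_pow, exp_sq]
    ring_nf
  have key := hLyap t 0 y0 le_rfl ht
  rw [hIcongr, hU0] at key
  have hmain : (∫ τ in (0:ℝ)..t, Real.exp (-(2 * γ * τ)) * ‖E.U τ 0 y0‖ ^ 2) ≤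
      K * (Real.exp (-2 * (γ - β) * t) * ‖q‖ ^ 2) := by linarith
  have hre : (∫ τ in (0:ℝ)..t, Real.exp (2 * γ * (t - τ)) * ‖C.UQ τ t q‖ ^ 2) =
      Real.exp (2 * γ * t) * ∫ τ in (0:ℝ)..t, Real.exp (-(2 * γ * τ)) * ‖E.U τ 0 y0‖ ^ 2 := by
    rw [← intervalIntegral.integral_const_mul]
    apply intervalIntegral.integral_congr
    intro τ hτ
    dsimp only
    rw [Set.uIcc_of_le ht] at hτ
    rw [UQ_evol C le_rfl hτ.1 hτ.2 q hPq |>.symm, ← hy0, ← mul_assoc,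
      exp_mul_exp _ _ (2 * γ * (t - τ)) (by ring)]
  rw [hre]
  calc Real.exp (2 * γ * t) * ∫ τ in (0:ℝ)..t, Real.exp (-(2 * γ * τ)) * ‖E.U τ 0 y0‖ ^ 2
      ≤ Real.exp (2 * γ * t) * (K * (Real.exp (-2 * (γ - β) * t) * ‖q‖ ^ 2)) :=
        mul_le_mul_of_nonneg_left hmain (Real.exp_pos _).le
    _ = K * (Real.exp (2 * γ * t) * Real.exp (-2 * (γ - β) * t)) * ‖q‖ ^ 2 := by ring
    _ = K * Real.exp (2 * β * t) * ‖q‖ ^ 2 := by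
        rw [exp_mul_exp _ _ (2 * β * t) (by ring)]

end datko

section est

variable {X : Type*} [NormedAddCommGroup X] [NormedSpace ℝ X]
  {E : EvolutionFamily X} {M ε ω : ℝ} (C : Compatible E M ε ω) {K γ β : ℝ}

lemma estP (hK : 1 ≤ K) (hγ : ε < γ) (hβ0 : 0 ≤ β)
    (hDat : ∀ (t s : ℝ) (x : X), 0 ≤ s → s ≤ t →
      ∫ τ in s..t, Real.exp (2 * γ * (τ - s)) * ‖E.U τ s (C.P s x)‖ ^ 2 ≤
        K * Real.exp (2 * β * s) * ‖C.P s x‖ ^ 2)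
    (t s : ℝ) (x : X) (hs : 0 ≤ s) (hst : s ≤ t) :
    ‖E.U t s (C.P s x)‖ ≤ M * K * Real.exp (γ + ω + (γ - ε)) * Real.exp ((ε + β) * s) *
      Real.exp (-(γ - ε) * (t - s)) * ‖C.P s x‖ := by
  have hM0 : (0:ℝ) < M := lt_of_lt_of_le one_pos C.hM
  have hK0 : (0:ℝ) < K := lt_of_lt_of_le one_pos hK
  have hγ0 : (0:ℝ) ≤ γ := le_trans C.hε hγ.le
  have hε0 := C.hε
  have hω0 := C.hω
  rcases le_or_gt t (s + 1) with h1 | h1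
  · -- short interval : use the growth bound directly
    have e1 : Real.exp (ε * s) ≤ Real.exp ((ε + β) * s) :=
      Real.exp_le_exp.2 (by nlinarith)
    have e2 : Real.exp (ω * (t - s)) ≤
        Real.exp (γ + ω + (γ - ε)) * Real.exp (-(γ - ε) * (t - s)) := by
      rw [← Real.exp_add]
      apply Real.exp_le_exp.2
      nlinarith [mul_nonneg (by nlinarith : (0:ℝ) ≤ ω + (γ - ε))
        (by nlinarith : (0:ℝ) ≤ 1 - (t - s))]
    calc ‖E.U t s (C.P s x)‖
        ≤ M * Real.exp (ε * s) * Real.exp (ω * (t - s)) * ‖C.P s x‖ := C.growP x hs hst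
      _ = M * 1 * Real.exp (ε * s) * Real.exp (ω * (t - s)) * ‖C.P s x‖ := by ring
      _ ≤ M * K * Real.exp ((ε + β) * s) *
          (Real.exp (γ + ω + (γ - ε)) * Real.exp (-(γ - ε) * (t - s))) * ‖C.P s x‖ := by
          gcongr
      _ = M * K * Real.exp (γ + ω + (γ - ε)) * Real.exp ((ε + β) * s) *
          Real.exp (-(γ - ε) * (t - s)) * ‖C.P s x‖ := by ring
  · -- long interval : use the Datko estimate
    have hs1 : s ≤ t - 1 := by linarith
    have hpoint : ∀ τ ∈ Set.Icc (t - 1) t,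
        Real.exp (2 * γ * (t - 1 - s)) * ‖E.U t s (C.P s x)‖ ^ 2 ≤
          (M * Real.exp (ε * t) * Real.exp ω) ^ 2 *
            (Real.exp (2 * γ * (τ - s)) * ‖E.U τ s (C.P s x)‖ ^ 2) := by
      intro τ hτ
      have hτ1 : s ≤ τ := le_trans hs1 hτ.1
      have hτ2 : τ ≤ t := hτ.2
      have hPw : C.P τ (E.U τ s (C.P s x)) = E.U τ s (C.P s x) := by
        rw [commP C hs hτ1, Pt_idem]
      have hg := C.growP (E.U τ s (C.P s x)) (hs.trans hτ1) hτ2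
      rw [hPw, Ucomp E hs hτ1 hτ2] at hg
      have hB : M * Real.exp (ε * τ) * Real.exp (ω * (t - τ)) * ‖E.U τ s (C.P s x)‖ ≤
          M * Real.exp (ε * t) * Real.exp ω * ‖E.U τ s (C.P s x)‖ := by
        have e1 : Real.exp (ε * τ) ≤ Real.exp (ε * t) :=
          Real.exp_le_exp.2 (by nlinarith)
        have e2 : Real.exp (ω * (t - τ)) ≤ Real.exp ω :=
          Real.exp_le_exp.2 (by nlinarith [hτ.1])
        gcongr
      have ha := hg.trans hB
      have ha2 : ‖E.U t s (C.P s x)‖ ^ 2 ≤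
          (M * Real.exp (ε * t) * Real.exp ω) ^ 2 * ‖E.U τ s (C.P s x)‖ ^ 2 := by
        rw [← mul_pow]
        exact pow_le_pow_left₀ (norm_nonneg _) ha 2
      have he : Real.exp (2 * γ * (t - 1 - s)) ≤ Real.exp (2 * γ * (τ - s)) :=
        Real.exp_le_exp.2 (by nlinarith [hτ.1])
      calc Real.exp (2 * γ * (t - 1 - s)) * ‖E.U t s (C.P s x)‖ ^ 2
          ≤ Real.exp (2 * γ * (τ - s)) *
            ((M * Real.exp (ε * t) * Real.exp ω) ^ 2 * ‖E.U τ s (C.P s x)‖ ^ 2) :=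
            mul_le_mul he ha2 (by positivity) (Real.exp_pos _).le
        _ = (M * Real.exp (ε * t) * Real.exp ω) ^ 2 *
            (Real.exp (2 * γ * (τ - s)) * ‖E.U τ s (C.P s x)‖ ^ 2) := by ring
    have hci : Continuous fun τ : ℝ => Real.exp (2 * γ * (τ - s)) * ‖E.U τ s (C.P s x)‖ ^ 2 :=
      (Real.continuous_exp.comp ((continuous_const.mul (continuous_id.sub continuous_const)))).mul
        ((contU E s (C.P s x)).norm.pow 2)
    have hkey : Real.exp (2 * γ * (t - 1 - s)) * ‖E.U t s (C.P s x)‖ ^ 2 ≤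
        (M * Real.exp (ε * t) * Real.exp ω) ^ 2 *
          (K * Real.exp (2 * β * s) * ‖C.P s x‖ ^ 2) := by
      have h0 : Real.exp (2 * γ * (t - 1 - s)) * ‖E.U t s (C.P s x)‖ ^ 2 =
          ∫ _τ in (t - 1)..t, Real.exp (2 * γ * (t - 1 - s)) * ‖E.U t s (C.P s x)‖ ^ 2 := by
        rw [intervalIntegral.integral_const, show t - (t - 1) = (1:ℝ) by ring, one_smul]
      rw [h0]
      calc (∫ _τ in (t - 1)..t, Real.exp (2 * γ * (t - 1 - s)) * ‖E.U t s (C.P s x)‖ ^ 2)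
          ≤ ∫ τ in (t - 1)..t, (M * Real.exp (ε * t) * Real.exp ω) ^ 2 *
              (Real.exp (2 * γ * (τ - s)) * ‖E.U τ s (C.P s x)‖ ^ 2) :=
            intervalIntegral.integral_mono_on (by linarith) intervalIntegrable_const
              ((continuous_const.mul hci).intervalIntegrable _ _) hpoint
        _ = (M * Real.exp (ε * t) * Real.exp ω) ^ 2 *
            ∫ τ in (t - 1)..t, Real.exp (2 * γ * (τ - s)) * ‖E.U τ s (C.P s x)‖ ^ 2 :=
            intervalIntegral.integral_const_mul _ _
        _ ≤ (M * Real.exp (ε * t) * Real.exp ω) ^ 2 *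
            ∫ τ in s..t, Real.exp (2 * γ * (τ - s)) * ‖E.U τ s (C.P s x)‖ ^ 2 := by
            apply mul_le_mul_of_nonneg_left _ (by positivity)
            exact intervalIntegral.integral_mono_interval hs1 (by linarith) le_rfl
              (ae_of_all _ fun τ => by positivity) (hci.intervalIntegrable _ _)
        _ ≤ _ := mul_le_mul_of_nonneg_left (hDat t s x hs hst) (by positivity)
    have hexp : (M * Real.exp (ε * t) * Real.exp ω) ^ 2 *
        (K * Real.exp (2 * β * s) * ‖C.P s x‖ ^ 2) ≤
        Real.exp (2 * γ * (t - 1 - s)) *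
          (M * K * Real.exp (γ + ω + (γ - ε)) * Real.exp ((ε + β) * s) *
            Real.exp (-(γ - ε) * (t - s)) * ‖C.P s x‖) ^ 2 := by
      have hEE : Real.exp (ε * t) ^ 2 * Real.exp ω ^ 2 * Real.exp (2 * β * s) ≤
          Real.exp (2 * γ * (t - 1 - s)) * (Real.exp (γ + ω + (γ - ε)) ^ 2 *
            Real.exp ((ε + β) * s) ^ 2 * Real.exp (-(γ - ε) * (t - s)) ^ 2) := by
        rw [exp_sq, exp_sq, exp_sq, exp_sq, exp_sq, ← Real.exp_add, ← Real.exp_add,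
          ← Real.exp_add, ← Real.exp_add, ← Real.exp_add]
        apply Real.exp_le_exp.2
        nlinarith
      calc (M * Real.exp (ε * t) * Real.exp ω) ^ 2 *
            (K * Real.exp (2 * β * s) * ‖C.P s x‖ ^ 2)
          = M ^ 2 * (K * 1) *
            (Real.exp (ε * t) ^ 2 * Real.exp ω ^ 2 * Real.exp (2 * β * s)) *
            ‖C.P s x‖ ^ 2 := by ring
        _ ≤ M ^ 2 * (K * K) *
            (Real.exp (2 * γ * (t - 1 - s)) * (Real.exp (γ + ω + (γ - ε)) ^ 2 *
              Real.exp ((ε + β) * s) ^ 2 * Real.exp (-(γ - ε) * (t - s)) ^ 2)) *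
            ‖C.P s x‖ ^ 2 := by gcongr
        _ = Real.exp (2 * γ * (t - 1 - s)) *
            (M * K * Real.exp (γ + ω + (γ - ε)) * Real.exp ((ε + β) * s) *
              Real.exp (-(γ - ε) * (t - s)) * ‖C.P s x‖) ^ 2 := by ring
    apply le_of_pow_le_pow_left₀ two_ne_zero (by positivity)
    calc ‖E.U t s (C.P s x)‖ ^ 2
        = Real.exp (-(2 * γ * (t - 1 - s))) *
          (Real.exp (2 * γ * (t - 1 - s)) * ‖E.U t s (C.P s x)‖ ^ 2) := by
          rw [← mul_assoc, exp_mul_exp _ _ 0 (by ring), Real.exp_zero, one_mul]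
      _ ≤ Real.exp (-(2 * γ * (t - 1 - s))) *
          ((M * Real.exp (ε * t) * Real.exp ω) ^ 2 *
            (K * Real.exp (2 * β * s) * ‖C.P s x‖ ^ 2)) :=
          mul_le_mul_of_nonneg_left hkey (Real.exp_pos _).le
      _ ≤ Real.exp (-(2 * γ * (t - 1 - s))) *
          (Real.exp (2 * γ * (t - 1 - s)) *
            (M * K * Real.exp (γ + ω + (γ - ε)) * Real.exp ((ε + β) * s) *
              Real.exp (-(γ - ε) * (t - s)) * ‖C.P s x‖) ^ 2) :=
          mul_le_mul_of_nonneg_left hexp (Real.exp_pos _).le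
      _ = (M * K * Real.exp (γ + ω + (γ - ε)) * Real.exp ((ε + β) * s) *
            Real.exp (-(γ - ε) * (t - s)) * ‖C.P s x‖) ^ 2 := by
          rw [← mul_assoc, exp_mul_exp _ _ 0 (by ring), Real.exp_zero, one_mul]

end est

section estQ

variable {X : Type*} [NormedAddCommGroup X] [NormedSpace ℝ X]
  {E : EvolutionFamily X} {M ε ω : ℝ} (C : Compatible E M ε ω) {K γ β : ℝ}

lemma estQ (hK : 1 ≤ K) (hγ : ε < γ) (hβ0 : 0 ≤ β)
    (hDat : ∀ (t : ℝ) (x : X), 0 ≤ t →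
      ∫ τ in (0:ℝ)..t, Real.exp (2 * γ * (t - τ)) * ‖C.UQ τ t (x - C.P t x)‖ ^ 2 ≤
        K * Real.exp (2 * β * t) * ‖x - C.P t x‖ ^ 2)
    (t s : ℝ) (x : X) (hs : 0 ≤ s) (hst : s ≤ t) :
    ‖C.UQ s t (x - C.P t x)‖ ≤ M * K * Real.exp (γ + ω + (γ + ε)) * Real.exp ((ε + β) * t) *
      Real.exp (-(γ + ε) * (t - s)) * ‖x - C.P t x‖ := by
  have hM0 : (0:ℝ) < M := lt_of_lt_of_le one_pos C.hM
  have hK0 : (0:ℝ) < K := lt_of_lt_of_le one_pos hK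
  have hγ0 : (0:ℝ) ≤ γ := le_trans C.hε hγ.le
  have hε0 := C.hε
  have hω0 := C.hω
  have ht : (0:ℝ) ≤ t := hs.trans hst
  set q := x - C.P t x with hqdef
  have hPq : C.P t q = 0 := PQ_zero C t x
  rcases le_or_gt t (s + 1) with h1 | h1
  · have e1 : Real.exp (ε * s) ≤ Real.exp ((ε + β) * t) :=
      Real.exp_le_exp.2 (by nlinarith)
    have e2 : Real.exp (ω * (t - s)) ≤
        Real.exp (γ + ω + (γ + ε)) * Real.exp (-(γ + ε) * (t - s)) := by
      rw [← Real.exp_add]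
      apply Real.exp_le_exp.2
      nlinarith [mul_nonneg (by nlinarith : (0:ℝ) ≤ ω + (γ + ε))
        (by nlinarith : (0:ℝ) ≤ 1 - (t - s))]
    calc ‖C.UQ s t q‖
        ≤ M * Real.exp (ε * s) * Real.exp (ω * (t - s)) * ‖q‖ := C.growQ x hs hst
      _ = M * 1 * Real.exp (ε * s) * Real.exp (ω * (t - s)) * ‖q‖ := by ring
      _ ≤ M * K * Real.exp ((ε + β) * t) *
          (Real.exp (γ + ω + (γ + ε)) * Real.exp (-(γ + ε) * (t - s))) * ‖q‖ := by gcongr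
      _ = M * K * Real.exp (γ + ω + (γ + ε)) * Real.exp ((ε + β) * t) *
          Real.exp (-(γ + ε) * (t - s)) * ‖q‖ := by ring
  · have hs1 : s + 1 ≤ t := h1.le
    set y0 := C.UQ 0 t q with hy0
    have hgid : ∀ τ, 0 ≤ τ → τ ≤ t → C.UQ τ t q = E.U τ 0 y0 := fun τ h0 h2 =>
      (UQ_evol C le_rfl h0 h2 q hPq).symm
    have hci : Continuous fun τ : ℝ => Real.exp (2 * γ * (t - τ)) * ‖E.U τ 0 y0‖ ^ 2 :=
      (Real.continuous_exp.comp ((continuous_const.mul (continuous_const.sub continuous_id)))).mul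
        ((contU E 0 y0).norm.pow 2)
    have hDat' : (∫ τ in (0:ℝ)..t, Real.exp (2 * γ * (t - τ)) * ‖E.U τ 0 y0‖ ^ 2) ≤
        K * Real.exp (2 * β * t) * ‖q‖ ^ 2 := by
      refine le_trans (le_of_eq ?_) (hDat t x ht)
      apply intervalIntegral.integral_congr
      intro τ hτ
      rw [Set.uIcc_of_le ht] at hτ
      dsimp only
      rw [hgid τ hτ.1 hτ.2]
    have hpoint : ∀ τ ∈ Set.Icc s (s + 1),
        Real.exp (2 * γ * (t - s - 1)) * ‖C.UQ s t q‖ ^ 2 ≤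
          (M * Real.exp (ε * s) * Real.exp ω) ^ 2 *
            (Real.exp (2 * γ * (t - τ)) * ‖E.U τ 0 y0‖ ^ 2) := by
      intro τ hτ
      have hτ1 : s ≤ τ := hτ.1
      have hτt : τ ≤ t := le_trans hτ.2 hs1
      have hτ0 : 0 ≤ τ := hs.trans hτ1
      have hPz : C.P τ (C.UQ τ t q) = 0 := C.UQ_range q hτ0 hτt
      have hg := C.growQ (C.UQ τ t q) hs hτ1
      rw [hPz, sub_zero, UQ_comp' C hs hτ1 hτt q hPq] at hg
      have hB : M * Real.exp (ε * s) * Real.exp (ω * (τ - s)) * ‖C.UQ τ t q‖ ≤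
          M * Real.exp (ε * s) * Real.exp ω * ‖C.UQ τ t q‖ := by
        have e2 : Real.exp (ω * (τ - s)) ≤ Real.exp ω :=
          Real.exp_le_exp.2 (by nlinarith [hτ.2])
        gcongr
      have ha := hg.trans hB
      have ha2 : ‖C.UQ s t q‖ ^ 2 ≤
          (M * Real.exp (ε * s) * Real.exp ω) ^ 2 * ‖C.UQ τ t q‖ ^ 2 := by
        rw [← mul_pow]
        exact pow_le_pow_left₀ (norm_nonneg _) ha 2
      have he : Real.exp (2 * γ * (t - s - 1)) ≤ Real.exp (2 * γ * (t - τ)) :=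
        Real.exp_le_exp.2 (by nlinarith [hτ.2])
      calc Real.exp (2 * γ * (t - s - 1)) * ‖C.UQ s t q‖ ^ 2
          ≤ Real.exp (2 * γ * (t - τ)) *
            ((M * Real.exp (ε * s) * Real.exp ω) ^ 2 * ‖C.UQ τ t q‖ ^ 2) :=
            mul_le_mul he ha2 (by positivity) (Real.exp_pos _).le
        _ = (M * Real.exp (ε * s) * Real.exp ω) ^ 2 *
            (Real.exp (2 * γ * (t - τ)) * ‖C.UQ τ t q‖ ^ 2) := by ring
        _ = (M * Real.exp (ε * s) * Real.exp ω) ^ 2 *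
            (Real.exp (2 * γ * (t - τ)) * ‖E.U τ 0 y0‖ ^ 2) := by
            rw [hgid τ hτ0 hτt]
    have hkey : Real.exp (2 * γ * (t - s - 1)) * ‖C.UQ s t q‖ ^ 2 ≤
        (M * Real.exp (ε * s) * Real.exp ω) ^ 2 *
          (K * Real.exp (2 * β * t) * ‖q‖ ^ 2) := by
      have h0 : Real.exp (2 * γ * (t - s - 1)) * ‖C.UQ s t q‖ ^ 2 =
          ∫ _τ in s..(s + 1), Real.exp (2 * γ * (t - s - 1)) * ‖C.UQ s t q‖ ^ 2 := by
        rw [intervalIntegral.integral_const, show s + 1 - s = (1:ℝ) by ring, one_smul]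
      rw [h0]
      calc (∫ _τ in s..(s + 1), Real.exp (2 * γ * (t - s - 1)) * ‖C.UQ s t q‖ ^ 2)
          ≤ ∫ τ in s..(s + 1), (M * Real.exp (ε * s) * Real.exp ω) ^ 2 *
              (Real.exp (2 * γ * (t - τ)) * ‖E.U τ 0 y0‖ ^ 2) :=
            intervalIntegral.integral_mono_on (by linarith) intervalIntegrable_const
              ((continuous_const.mul hci).intervalIntegrable _ _) hpoint
        _ = (M * Real.exp (ε * s) * Real.exp ω) ^ 2 *
            ∫ τ in s..(s + 1), Real.exp (2 * γ * (t - τ)) * ‖E.U τ 0 y0‖ ^ 2 :=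
            intervalIntegral.integral_const_mul _ _
        _ ≤ (M * Real.exp (ε * s) * Real.exp ω) ^ 2 *
            ∫ τ in (0:ℝ)..t, Real.exp (2 * γ * (t - τ)) * ‖E.U τ 0 y0‖ ^ 2 := by
            apply mul_le_mul_of_nonneg_left _ (by positivity)
            exact intervalIntegral.integral_mono_interval hs (by linarith) hs1
              (ae_of_all _ fun τ => by positivity) (hci.intervalIntegrable _ _)
        _ ≤ _ := mul_le_mul_of_nonneg_left hDat' (by positivity)
    have hexp : (M * Real.exp (ε * s) * Real.exp ω) ^ 2 *
        (K * Real.exp (2 * β * t) * ‖q‖ ^ 2) ≤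
        Real.exp (2 * γ * (t - s - 1)) *
          (M * K * Real.exp (γ + ω + (γ + ε)) * Real.exp ((ε + β) * t) *
            Real.exp (-(γ + ε) * (t - s)) * ‖q‖) ^ 2 := by
      have hEE : Real.exp (ε * s) ^ 2 * Real.exp ω ^ 2 * Real.exp (2 * β * t) ≤
          Real.exp (2 * γ * (t - s - 1)) * (Real.exp (γ + ω + (γ + ε)) ^ 2 *
            Real.exp ((ε + β) * t) ^ 2 * Real.exp (-(γ + ε) * (t - s)) ^ 2) := by
        rw [exp_sq, exp_sq, exp_sq, exp_sq, exp_sq, ← Real.exp_add, ← Real.exp_add,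
          ← Real.exp_add, ← Real.exp_add, ← Real.exp_add]
        apply Real.exp_le_exp.2
        nlinarith [mul_nonneg hε0 hs]
      calc (M * Real.exp (ε * s) * Real.exp ω) ^ 2 *
            (K * Real.exp (2 * β * t) * ‖q‖ ^ 2)
          = M ^ 2 * (K * 1) *
            (Real.exp (ε * s) ^ 2 * Real.exp ω ^ 2 * Real.exp (2 * β * t)) * ‖q‖ ^ 2 := by ring
        _ ≤ M ^ 2 * (K * K) *
            (Real.exp (2 * γ * (t - s - 1)) * (Real.exp (γ + ω + (γ + ε)) ^ 2 *
              Real.exp ((ε + β) * t) ^ 2 * Real.exp (-(γ + ε) * (t - s)) ^ 2)) * ‖q‖ ^ 2 := by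
            gcongr
        _ = Real.exp (2 * γ * (t - s - 1)) *
            (M * K * Real.exp (γ + ω + (γ + ε)) * Real.exp ((ε + β) * t) *
              Real.exp (-(γ + ε) * (t - s)) * ‖q‖) ^ 2 := by ring
    apply le_of_pow_le_pow_left₀ two_ne_zero (by positivity)
    calc ‖C.UQ s t q‖ ^ 2
        = Real.exp (-(2 * γ * (t - s - 1))) *
          (Real.exp (2 * γ * (t - s - 1)) * ‖C.UQ s t q‖ ^ 2) := by
          rw [← mul_assoc, exp_mul_exp _ _ 0 (by ring), Real.exp_zero, one_mul]
      _ ≤ Real.exp (-(2 * γ * (t - s - 1))) *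
          ((M * Real.exp (ε * s) * Real.exp ω) ^ 2 *
            (K * Real.exp (2 * β * t) * ‖q‖ ^ 2)) :=
          mul_le_mul_of_nonneg_left hkey (Real.exp_pos _).le
      _ ≤ Real.exp (-(2 * γ * (t - s - 1))) *
          (Real.exp (2 * γ * (t - s - 1)) *
            (M * K * Real.exp (γ + ω + (γ + ε)) * Real.exp ((ε + β) * t) *
              Real.exp (-(γ + ε) * (t - s)) * ‖q‖) ^ 2) :=
          mul_le_mul_of_nonneg_left hexp (Real.exp_pos _).le
      _ = (M * K * Real.exp (γ + ω + (γ + ε)) * Real.exp ((ε + β) * t) *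
            Real.exp (-(γ + ε) * (t - s)) * ‖q‖) ^ 2 := by
          rw [← mul_assoc, exp_mul_exp _ _ 0 (by ring), Real.exp_zero, one_mul]

end estQ

/-- **Lyapunov sufficiency** (Theorem 4 of the paper).  Let `E` be an evolution family
and `P(·)` a compatible projection valued function with constants `M ≥ 1`, `ε ≥ 0`,
`ω > 0`.  Suppose there exist `K ≥ 1`, `γ > ε`, `β ∈ [0,γ)` such that for the specific
choice `H(t)x = e^{γt}P(t)x + e^{-γt}Q(t)x` there is a continuous `L : ℝ₊ × X → ℝ` with
(i) `L(t,U(t,s)x) + ∫_s^t ‖H(τ)U(τ,s)x‖² dτ ≤ L(s,x)` for `t ≥ s ≥ 0`;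
(ii) `|L(t,x)| ≤ K(e^{2(γ+β)t}‖P(t)x‖² + e^{-2(γ-β)t}‖Q(t)x‖²)`;
(iii) `L(t,P(t)x) ≥ 0` and `L(t,Q(t)x) ≤ 0`.
Then the Datko estimate with `p = 2` holds and, consequently, `E` has an exponential
dichotomy. -/
theorem stmt_14 {X : Type*} [NormedAddCommGroup X] [NormedSpace ℝ X] [CompleteSpace X]
    (E : EvolutionFamily X) (M ε ω : ℝ) (C : Compatible E M ε ω)
    (K γ β : ℝ) (hK : 1 ≤ K) (hγ : ε < γ) (hβ0 : 0 ≤ β) (hβγ : β < γ)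
    (H : ℝ → X →L[ℝ] X)
    (hH : ∀ (t : ℝ) (x : X),
      H t x = Real.exp (γ * t) • C.P t x + Real.exp (-γ * t) • (x - C.P t x))
    (L : ℝ → X → ℝ) (hLcont : Continuous fun q : ℝ × X => L q.1 q.2)
    (hLyap : ∀ (t s : ℝ) (x : X), 0 ≤ s → s ≤ t →
      L t (E.U t s x) + (∫ τ in s..t, ‖H τ (E.U τ s x)‖ ^ 2) ≤ L s x)
    (hbound : ∀ (t : ℝ) (x : X), 0 ≤ t →
      |L t x| ≤ K * (Real.exp (2 * (γ + β) * t) * ‖C.P t x‖ ^ 2 +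
        Real.exp (-2 * (γ - β) * t) * ‖x - C.P t x‖ ^ 2))
    (hsign : ∀ (t : ℝ) (x : X), 0 ≤ t → 0 ≤ L t (C.P t x) ∧ L t (x - C.P t x) ≤ 0) :
    (∀ (t : ℝ) (x : X), 0 ≤ t →
      (∫ τ in Set.Ioi t, Real.exp (2 * γ * (τ - t)) * ‖E.U τ t (C.P t x)‖ ^ 2) +
        (∫ τ in (0:ℝ)..t, Real.exp (2 * γ * (t - τ)) * ‖C.UQ τ t (x - C.P t x)‖ ^ 2) ≤
        K * Real.exp (2 * β * t) * (‖C.P t x‖ ^ 2 + ‖x - C.P t x‖ ^ 2)) ∧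
    ∃ N₁ N₂ α₁ α₂ ν₁ ν₂ : ℝ, 1 ≤ N₁ ∧ 1 ≤ N₂ ∧ 0 ≤ α₁ ∧ 0 ≤ α₂ ∧ 0 < ν₁ ∧ 0 < ν₂ ∧
      α₂ < ν₂ ∧
      (∀ (t s : ℝ) (x : X), 0 ≤ s → s ≤ t →
        ‖E.U t s (C.P s x)‖ ≤
          N₁ * Real.exp (α₁ * s) * Real.exp (-ν₁ * (t - s)) * ‖C.P s x‖) ∧
      (∀ (t s : ℝ) (x : X), 0 ≤ s → s ≤ t →
        ‖C.UQ s t (x - C.P t x)‖ ≤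
          N₂ * Real.exp (α₂ * t) * Real.exp (-ν₂ * (t - s)) * ‖x - C.P t x‖) := by
  have hDatP := fun t s x hs hst => datkoP C hH hLyap hbound hsign t s x hs hst
  have hDatQ := fun t x ht => datkoQ C hH hLyap hbound hsign t x ht
  constructor
  · -- the Datko estimate
    intro t x ht
    set f : ℝ → ℝ := fun τ => Real.exp (2 * γ * (τ - t)) * ‖E.U τ t (C.P t x)‖ ^ 2 with hf
    have hfc : Continuous f :=
      (Real.continuous_exp.comp ((continuous_const.mul (continuous_id.sub continuous_const)))).mul
        ((contU E t (C.P t x)).norm.pow 2)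
    have hf0 : ∀ τ, 0 ≤ f τ := fun τ => by positivity
    set B : ℝ := K * Real.exp (2 * β * t) * ‖C.P t x‖ ^ 2 with hB
    have htend : Tendsto (fun n : ℕ => t + (n : ℝ)) atTop atTop :=
      tendsto_atTop_add_const_left _ t tendsto_natCast_atTop_atTop
    have hfi : ∀ n : ℕ, IntegrableOn f (Set.Ioc t (t + (n : ℝ))) :=
      fun n => hfc.integrableOn_Ioc
    have hbd : ∀ n : ℕ, (∫ τ in t..(t + (n : ℝ)), f τ) ≤ B := by
      intro n
      exact hDatP (t + (n : ℝ)) t x ht (le_add_of_nonneg_right n.cast_nonneg)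
    have hbd' : ∀ n : ℕ, (∫ τ in t..(t + (n : ℝ)), ‖f τ‖) ≤ B := by
      intro n
      have : (∫ τ in t..(t + (n : ℝ)), ‖f τ‖) = ∫ τ in t..(t + (n : ℝ)), f τ := by
        apply intervalIntegral.integral_congr
        intro τ _
        exact Real.norm_of_nonneg (hf0 τ)
      rw [this]; exact hbd n
    have hInt : IntegrableOn f (Set.Ioi t) :=
      integrableOn_Ioi_of_intervalIntegral_norm_bounded B t hfi htend
        (Eventually.of_forall hbd')
    have hlim := intervalIntegral_tendsto_integral_Ioi t hInt htend
    have hIoi : (∫ τ in Set.Ioi t, f τ) ≤ B :=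
      le_of_tendsto hlim (Eventually.of_forall hbd)
    have hQ := hDatQ t x ht
    calc (∫ τ in Set.Ioi t, Real.exp (2 * γ * (τ - t)) * ‖E.U τ t (C.P t x)‖ ^ 2) +
          (∫ τ in (0:ℝ)..t, Real.exp (2 * γ * (t - τ)) * ‖C.UQ τ t (x - C.P t x)‖ ^ 2)
        ≤ B + K * Real.exp (2 * β * t) * ‖x - C.P t x‖ ^ 2 := add_le_add hIoi hQ
      _ = K * Real.exp (2 * β * t) * (‖C.P t x‖ ^ 2 + ‖x - C.P t x‖ ^ 2) := by
          rw [hB]; ring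
  · -- the exponential dichotomy
    refine ⟨M * K * Real.exp (γ + ω + (γ - ε)), M * K * Real.exp (γ + ω + (γ + ε)),
      ε + β, ε + β, γ - ε, γ + ε, ?_, ?_, ?_, ?_, ?_, ?_, ?_, ?_, ?_⟩
    · have h1 : (1:ℝ) ≤ Real.exp (γ + ω + (γ - ε)) :=
        Real.one_le_exp (by nlinarith [C.hε, C.hω.le])
      have h2 : (1:ℝ) * 1 ≤ M * K :=
        mul_le_mul C.hM hK zero_le_one (le_trans zero_le_one C.hM)
      have h3 := mul_le_mul h2 h1 zero_le_one (by nlinarith)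
      simpa using h3
    · have h1 : (1:ℝ) ≤ Real.exp (γ + ω + (γ + ε)) :=
        Real.one_le_exp (by nlinarith [C.hε, C.hω.le])
      have h2 : (1:ℝ) * 1 ≤ M * K :=
        mul_le_mul C.hM hK zero_le_one (le_trans zero_le_one C.hM)
      have h3 := mul_le_mul h2 h1 zero_le_one (by nlinarith)
      simpa using h3
    · linarith [C.hε]
    · linarith [C.hε]
    · linarith
    · linarith [C.hε]
    · linarith
    · intro t s x hs hst
      have h := estP C hK hγ hβ0 hDatP t s x hs hst
      convert h using 4 <;> ring
    · intro t s x hs hst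
      have h := estQ C hK hγ hβ0 hDatQ t s x hs hst
      convert h using 4 <;> ring
end

section
/- (Hilbert space corollary.) Let U be an evolution family on a Hilbert space X and P(·) a compatible projection valued function with constants M ≥ 1, ε ≥ 0, ω > 0. Suppose there exist K ≥ 1, γ > ε, β ∈ [0,γ) such that for H(t)x = e^{γt}P(t)x + e^{-γt}Q(t)x there is a strongly continuous self-adjoint operator-valued function W: R_+ → B(X) with: (1) ⟨U(t,s)*W(t)U(t,s)x + ∫_s^t U(τ,s)*H(τ)*H(τ)U(τ,s)x dτ, x⟩ ≤ ⟨W(s)x, x⟩; (2) |⟨W(t)x,x⟩| ≤ K(e^{2(γ+β)t}||P(t)x||^2 + e^{-2(γ-β)t}||Q(t)x||^2); (3) ⟨W(t)P(t)x, P(t)x⟩ ≥ 0; (4) ⟨W(t)Q(t)x, Q(t)x⟩ ≤ 0, for all t ≥ s ≥ 0 and x ∈ X. Then U has an exponential dichotomy. -/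
/-!
With `L(t, x) = ⟪W(t) x, x⟫`, hypothesis (1) is the Lyapunov decay inequality
`L(t, U(t,s)x) + ∫_s^t ‖H(τ)U(τ,s)x‖² dτ ≤ L(s, x)`. The integrand `U(τ,s)*H(τ)*H(τ)U(τ,s)x` of
(1) is only weakly continuous, but by Pettis' theorem it is Bochner integrable, so the integral
may be paired with `x`.

For `x` in the range of `P(s)`, the sign conditions and the bound on `L` give
`∫_s^t (e^{γτ}‖U(τ,s)x‖)² dτ ≤ K (e^{(γ+β)s}‖x‖)²`. On the last unit interval `[t-1, t]` the
growth bound of Definition 3 controls `‖U(t,s)x‖` by a multiple of `e^{γτ}‖U(τ,s)x‖`, which yields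
decay at rate `γ - ε`. Symmetrically, for `x` in the kernel of `P(s)` the integral of
`(e^{-γτ}‖U(τ,s)x‖)²` is at most `K (e^{-(γ-β)t}‖U(t,s)x‖)²`, and the first unit interval
`[s, s+1]` together with the backward growth bound on `Q` gives the unstable estimate. When
`t - s ≤ 1` the growth bounds alone suffice.
-/

open Real MeasureTheory Filter

open Topology Set
open scoped RealInnerProductSpace

theorem IsCompact.exists_bound_of_continuous_apply {α 𝕜 E F : Type*} [TopologicalSpace α]
    [NontriviallyNormedField 𝕜] [NormedAddCommGroup E] [NormedSpace 𝕜 E] [CompleteSpace E]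
    [NormedAddCommGroup F] [NormedSpace 𝕜 F] {K : Set α} (hK : IsCompact K)
    {f : α → E →L[𝕜] F} (hf : ∀ x, Continuous fun a => f a x) :
    ∃ C, ∀ a ∈ K, ‖f a‖ ≤ C := by
  have hpt : ∀ x, ∃ C, ∀ a : K, ‖f a x‖ ≤ C := fun x =>
    let ⟨C, hC⟩ := hK.exists_bound_of_continuousOn (hf x).continuousOn
    ⟨C, fun a => hC a a.2⟩
  obtain ⟨C, hC⟩ := banach_steinhaus hpt
  exact ⟨C, fun a ha => hC ⟨a, ha⟩⟩

theorem Continuous.clm_apply_of_continuous_apply {α 𝕜 E F : Type*} [TopologicalSpace α]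
    [WeaklyLocallyCompactSpace α] [NontriviallyNormedField 𝕜] [NormedAddCommGroup E]
    [NormedSpace 𝕜 E] [CompleteSpace E] [NormedAddCommGroup F] [NormedSpace 𝕜 F]
    {f : α → E →L[𝕜] F} {g : α → E} (hf : ∀ x, Continuous fun a => f a x) (hg : Continuous g) :
    Continuous fun a => f a (g a) := by
  refine continuous_iff_continuousAt.2 fun a₀ => ?_
  obtain ⟨K, hK, hKa⟩ := exists_compact_mem_nhds a₀
  obtain ⟨C, hC⟩ := hK.exists_bound_of_continuous_apply hf
  have hsmall : Tendsto (fun a => f a (g a - g a₀)) (𝓝 a₀) (𝓝 0) := by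
    refine squeeze_zero_norm' ?_
      (by simpa using ((hg.tendsto a₀).sub_const (g a₀)).norm.const_mul C)
    filter_upwards [hKa] with a ha using (f a).le_of_opNorm_le (hC a ha) _
  simpa [ContinuousAt] using hsmall.add ((hf (g a₀)).tendsto a₀)

section Hilbert

variable {X : Type*} [NormedAddCommGroup X] [InnerProductSpace ℝ X] [CompleteSpace X]

/-- Pettis' theorem for weakly continuous `F`: it takes values in the closed span of `F '' D` for a
countable dense `D`, and its projections onto the spans of finite parts of `F '' D` are
norm-continuous. -/
theorem stronglyMeasurable_of_continuous_inner {α : Type*} [TopologicalSpace α]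
    [SecondCountableTopology α] [MeasurableSpace α] [OpensMeasurableSpace α] {F : α → X}
    (hF : ∀ y, Continuous fun a => ⟪F a, y⟫) : StronglyMeasurable F := by
  obtain ⟨D, hDc, hDd⟩ := TopologicalSpace.exists_countable_dense α
  have := hDc.to_subtype
  let U : Finset D → Submodule ℝ X := fun I => Submodule.span ℝ ((fun d : D => F d) '' I)
  have hfin (I) : FiniteDimensional ℝ (U I) :=
    FiniteDimensional.span_of_finite ℝ (I.finite_toSet.image _)
  have hmono : Monotone U := fun I J h => Submodule.span_mono (Set.image_mono h)
  have hmem (a : α) : F a ∈ (⨆ I, U I).topologicalClosure := by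
    rw [← Submodule.orthogonal_orthogonal_eq_closure, Submodule.mem_orthogonal]
    intro w hw
    have hwD : EqOn (fun a => ⟪F a, w⟫) 0 D := fun d hd => by
      rw [Submodule.mem_orthogonal] at hw
      simpa [real_inner_comm] using hw (F d) (Submodule.mem_iSup_of_mem {⟨d, hd⟩}
        (Submodule.subset_span ⟨⟨d, hd⟩, by simp, rfl⟩))
    rw [real_inner_comm]
    exact congrFun ((hF w).ext_on hDd continuous_const hwD) a
  refine stronglyMeasurable_of_tendsto atTop (f := fun I a => (U I).starProjection (F a))
    (fun I => Continuous.stronglyMeasurable ?_) (tendsto_pi_nhds.2 fun a => ?_)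
  · rw [(stdOrthonormalBasis ℝ (U I)).starProjection_eq_sum_rankOne]
    simp only [FunLike.coe_sum, Finset.sum_apply, InnerProductSpace.rankOne_apply]
    refine continuous_finsetSum _ fun i _ => Continuous.smul ?_ continuous_const
    exact (hF _).congr fun a => real_inner_comm _ _
  · convert Submodule.starProjection_tendsto_closure_iSup U hmono (F a)
    exact (Submodule.starProjection_eq_self_iff.2 (hmem a)).symm

theorem IsCompact.integrableOn_of_continuous_inner {α : Type*} [TopologicalSpace α] [T2Space α]
    [SecondCountableTopology α] [MeasurableSpace α] [OpensMeasurableSpace α] {μ : Measure α}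
    [IsFiniteMeasureOnCompacts μ] {K : Set α} (hK : IsCompact K) {F : α → X}
    (hF : ∀ y, Continuous fun a => ⟪F a, y⟫) : IntegrableOn F K μ := by
  obtain ⟨C, hC⟩ := hK.exists_bound_of_continuous_apply (f := fun a => innerSL ℝ (F a)) hF
  refine .of_bound hK.measure_lt_top
    (stronglyMeasurable_of_continuous_inner hF).aestronglyMeasurable C ?_
  filter_upwards [ae_restrict_mem hK.measurableSet] with a ha
  simpa using hC a ha

theorem inner_intervalIntegral_adjoint_adjoint_apply {Y Z : Type*} [NormedAddCommGroup Y]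
    [InnerProductSpace ℝ Y] [CompleteSpace Y] [NormedAddCommGroup Z] [InnerProductSpace ℝ Z]
    [CompleteSpace Z] {A : ℝ → X →L[ℝ] Y} {B : ℝ → Y →L[ℝ] Z}
    (hA : ∀ x, Continuous fun τ => A τ x) (hB : ∀ y, Continuous fun τ => B τ y)
    (s t : ℝ) (x : X) :
    ⟪∫ τ in s..t, ContinuousLinearMap.adjoint (A τ)
        (ContinuousLinearMap.adjoint (B τ) (B τ (A τ x))), x⟫ =
      ∫ τ in s..t, ‖B τ (A τ x)‖ ^ 2 := by
  set F : ℝ → X := fun τ => ContinuousLinearMap.adjoint (A τ)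
    (ContinuousLinearMap.adjoint (B τ) (B τ (A τ x)))
  have hF (τ : ℝ) (y : X) : ⟪F τ, y⟫ = ⟪B τ (A τ x), B τ (A τ y)⟫ := by
    simp only [F, ContinuousLinearMap.adjoint_inner_left]
  have hBA (y : X) : Continuous fun τ => B τ (A τ y) := (hA y).clm_apply_of_continuous_apply hB
  have hint : IntegrableOn F (uIcc s t) := isCompact_uIcc.integrableOn_of_continuous_inner
    fun y => by simpa only [hF] using (hBA x).inner (𝕜 := ℝ) (hBA y)
  rw [real_inner_comm, ← innerSL_apply_apply,
    ← (innerSL ℝ x).intervalIntegral_comp_comm hint.intervalIntegrable]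
  refine intervalIntegral.integral_congr fun τ _ => ?_
  rw [innerSL_apply_apply, real_inner_comm, hF, real_inner_self_eq_norm_sq]

end Hilbert

theorem le_mul_mul_of_integral_sq_le {g : ℝ → ℝ} {s t a c M K b : ℝ} (hg : Continuous g)
    (hsa : s ≤ a) (hat : a + 1 ≤ t) (hc : 0 ≤ c) (hM : 0 ≤ M)
    (hcg : ∀ τ ∈ Icc a (a + 1), c ≤ M * g τ) (hK : 1 ≤ K) (hb : 0 ≤ b)
    (hint : ∫ τ in s..t, g τ ^ 2 ≤ K * b ^ 2) : c ≤ M * K * b := by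
  have hMg : Continuous fun τ => (M * g τ) ^ 2 := by fun_prop
  have hlow : ∫ _ in a..(a + 1), c ^ 2 ≤ ∫ τ in a..(a + 1), (M * g τ) ^ 2 :=
    intervalIntegral.integral_mono_on (by linarith) intervalIntegrable_const
      (hMg.intervalIntegrable _ _) fun τ hτ => pow_le_pow_left₀ hc (hcg τ hτ) 2
  have hsub : ∫ τ in a..(a + 1), (M * g τ) ^ 2 ≤ ∫ τ in s..t, (M * g τ) ^ 2 :=
    intervalIntegral.integral_mono_interval hsa (by linarith) hat
      (ae_of_all _ fun τ => sq_nonneg _) (hMg.intervalIntegrable _ _)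
  simp only [intervalIntegral.integral_const, add_sub_cancel_left, one_smul, mul_pow,
    intervalIntegral.integral_const_mul] at hlow hsub
  refine (pow_le_pow_iff_left₀ hc (by positivity) two_ne_zero).1 ?_
  calc c ^ 2 ≤ M ^ 2 * ∫ τ in s..t, g τ ^ 2 := hlow.trans hsub
    _ ≤ M ^ 2 * (K * b ^ 2) := by gcongr
    _ ≤ M ^ 2 * (K ^ 2 * b ^ 2) := by gcongr; nlinarith
    _ = (M * K * b) ^ 2 := by ring

theorem EvolutionFamily.continuous_U_left {X : Type*} [NormedAddCommGroup X] [NormedSpace ℝ X]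
    (E : EvolutionFamily X) (s : ℝ) (x : X) : Continuous fun τ => E.U τ s x :=
  (E.cont x).comp (continuous_id.prodMk continuous_const)

theorem EvolutionFamily.U_apply_U {X : Type*} [NormedAddCommGroup X] [NormedSpace ℝ X]
    (E : EvolutionFamily X) {t s t₀ : ℝ} (h₀ : 0 ≤ t₀) (ht₀s : t₀ ≤ s) (hst : s ≤ t) (x : X) :
    E.U t s (E.U s t₀ x) = E.U t t₀ x :=
  DFunLike.congr_fun (E.map_comp h₀ ht₀s hst) x

namespace Compatible

variable {X : Type*} [NormedAddCommGroup X] [NormedSpace ℝ X] {E : EvolutionFamily X}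
  {M ε ω : ℝ} (C : Compatible E M ε ω)

/-- The operator `H(t) = e^{γt} P(t) + e^{-γt} Q(t)` of the paper. -/
noncomputable def weight (γ t : ℝ) : X →L[ℝ] X :=
  exp (γ * t) • C.P t + exp (-γ * t) • (ContinuousLinearMap.id ℝ X - C.P t)

theorem weight_apply (γ t : ℝ) (x : X) :
    C.weight γ t x = exp (γ * t) • C.P t x + exp (-γ * t) • (x - C.P t x) := rfl

theorem continuous_weight_apply (γ : ℝ) (x : X) : Continuous fun t => C.weight γ t x := by
  simp only [weight_apply]
  have := C.contP x
  fun_prop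

theorem P_apply_P (t : ℝ) (x : X) : C.P t (C.P t x) = C.P t x :=
  DFunLike.congr_fun (C.idem t) x

theorem P_apply_U {t s : ℝ} (hs : 0 ≤ s) (hst : s ≤ t) (x : X) :
    C.P t (E.U t s x) = E.U t s (C.P s x) :=
  DFunLike.congr_fun (C.comm hs hst) x

theorem norm_weight_apply_of_P_eq_self {γ t : ℝ} {x : X} (hx : C.P t x = x) :
    ‖C.weight γ t x‖ = exp (γ * t) * ‖x‖ := by
  rw [weight_apply, hx, sub_self, smul_zero, add_zero, norm_smul,
    norm_of_nonneg (exp_pos _).le]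

theorem norm_weight_apply_of_P_eq_zero {γ t : ℝ} {x : X} (hx : C.P t x = 0) :
    ‖C.weight γ t x‖ = exp (-γ * t) * ‖x‖ := by
  rw [weight_apply, hx, smul_zero, zero_add, sub_zero, norm_smul,
    norm_of_nonneg (exp_pos _).le]

theorem norm_U_le_of_P_eq_self {t s : ℝ} (hs : 0 ≤ s) (hst : s ≤ t) {x : X}
    (hx : C.P s x = x) :
    ‖E.U t s x‖ ≤ M * exp (ε * s) * exp (ω * (t - s)) * ‖x‖ := by
  simpa only [hx] using C.growP x hs hst

theorem norm_le_of_P_eq_zero {t s : ℝ} (hs : 0 ≤ s) (hst : s ≤ t) {x : X}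
    (hx : C.P s x = 0) :
    ‖x‖ ≤ M * exp (ε * s) * exp (ω * (t - s)) * ‖E.U t s x‖ := by
  have hinv := C.left_inv x hs hst
  have hgrow := C.growQ (E.U t s x) hs hst
  rw [hx, sub_zero] at hinv
  rwa [C.P_apply_U hs hst, hx, map_zero, sub_zero, hinv] at hgrow

def HasExponentialDichotomy : Prop :=
  ∃ N₁ N₂ α₁ α₂ ν₁ ν₂ : ℝ, 1 ≤ N₁ ∧ 1 ≤ N₂ ∧ 0 ≤ α₁ ∧ 0 ≤ α₂ ∧ 0 < ν₁ ∧ 0 < ν₂ ∧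
    α₂ < ν₂ ∧
    (∀ (t s : ℝ) (x : X), 0 ≤ s → s ≤ t →
      ‖E.U t s (C.P s x)‖ ≤
        N₁ * exp (α₁ * s) * exp (-ν₁ * (t - s)) * ‖C.P s x‖) ∧
    (∀ (t s : ℝ) (x : X), 0 ≤ s → s ≤ t →
      ‖C.UQ s t (x - C.P t x)‖ ≤
        N₂ * exp (α₂ * t) * exp (-ν₂ * (t - s)) * ‖x - C.P t x‖)

structure IsLyapunov (K γ β : ℝ) (L : ℝ → X → ℝ) : Prop where
  decay : ∀ (t s : ℝ) (x : X), 0 ≤ s → s ≤ t →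
    L t (E.U t s x) + ∫ τ in s..t, ‖C.weight γ τ (E.U τ s x)‖ ^ 2 ≤ L s x
  abs_le : ∀ (t : ℝ) (x : X), 0 ≤ t →
    |L t x| ≤ K * (exp (2 * (γ + β) * t) * ‖C.P t x‖ ^ 2 +
      exp (-2 * (γ - β) * t) * ‖x - C.P t x‖ ^ 2)
  nonneg_P : ∀ (t : ℝ) (x : X), 0 ≤ t → 0 ≤ L t (C.P t x)
  nonpos_Q : ∀ (t : ℝ) (x : X), 0 ≤ t → L t (x - C.P t x) ≤ 0

namespace IsLyapunov

variable {C} {K γ β : ℝ} {L : ℝ → X → ℝ} (hL : C.IsLyapunov K γ β L)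
include hL

theorem integral_le_of_P_eq_self {t s : ℝ} (hs : 0 ≤ s) (hst : s ≤ t) {x : X}
    (hx : C.P s x = x) :
    ∫ τ in s..t, (exp (γ * τ) * ‖E.U τ s x‖) ^ 2 ≤ K * (exp ((γ + β) * s) * ‖x‖) ^ 2 := by
  have hPU (τ : ℝ) (hτ : s ≤ τ) : C.P τ (E.U τ s x) = E.U τ s x := by
    rw [C.P_apply_U hs hτ, hx]
  have hend : 0 ≤ L t (E.U t s x) := by
    simpa only [hPU t hst] using hL.nonneg_P t (E.U t s x) (hs.trans hst)
  have hstart : L s x ≤ K * (exp ((γ + β) * s) * ‖x‖) ^ 2 := by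
    refine (le_abs_self _).trans ((hL.abs_le s x hs).trans_eq ?_)
    rw [hx, sub_self, norm_zero, mul_pow, ← exp_nat_mul]
    ring_nf
  have hweight : ∫ τ in s..t, ‖C.weight γ τ (E.U τ s x)‖ ^ 2 =
      ∫ τ in s..t, (exp (γ * τ) * ‖E.U τ s x‖) ^ 2 :=
    intervalIntegral.integral_congr fun τ hτ => by
      rw [C.norm_weight_apply_of_P_eq_self (hPU τ (uIcc_of_le hst ▸ hτ).1)]
  linarith [hL.decay t s x hs hst]

theorem integral_le_of_P_eq_zero {t s : ℝ} (hs : 0 ≤ s) (hst : s ≤ t) {x : X}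
    (hx : C.P s x = 0) :
    ∫ τ in s..t, (exp (-γ * τ) * ‖E.U τ s x‖) ^ 2 ≤
      K * (exp (-(γ - β) * t) * ‖E.U t s x‖) ^ 2 := by
  have hPU (τ : ℝ) (hτ : s ≤ τ) : C.P τ (E.U τ s x) = 0 := by
    rw [C.P_apply_U hs hτ, hx, map_zero]
  have hstart : L s x ≤ 0 := by
    simpa only [hx, sub_zero] using hL.nonpos_Q s x hs
  have hend : -L t (E.U t s x) ≤ K * (exp (-(γ - β) * t) * ‖E.U t s x‖) ^ 2 := by
    refine (neg_le_abs _).trans ((hL.abs_le t _ (hs.trans hst)).trans_eq ?_)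
    rw [hPU t hst, sub_zero, norm_zero, mul_pow, ← exp_nat_mul]
    ring_nf
  have hweight : ∫ τ in s..t, ‖C.weight γ τ (E.U τ s x)‖ ^ 2 =
      ∫ τ in s..t, (exp (-γ * τ) * ‖E.U τ s x‖) ^ 2 :=
    intervalIntegral.integral_congr fun τ hτ => by
      rw [C.norm_weight_apply_of_P_eq_zero (hPU τ (uIcc_of_le hst ▸ hτ).1)]
  linarith [hL.decay t s x hs hst]

theorem exp_mul_norm_U_le_of_P_eq_self (hK : 1 ≤ K) (hγ : ε ≤ γ) {t s : ℝ} (hs : 0 ≤ s)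
    (hst : s + 1 ≤ t) {x : X} (hx : C.P s x = x) :
    exp ((γ - ε) * (t - 1) - ω) * ‖E.U t s x‖ ≤ M * K * (exp ((γ + β) * s) * ‖x‖) := by
  have hg : Continuous fun τ => exp (γ * τ) * ‖E.U τ s x‖ := by
    have := E.continuous_U_left s x
    fun_prop
  refine le_mul_mul_of_integral_sq_le hg (a := t - 1) (by linarith) (by linarith) (by positivity)
    (by linarith [C.hM]) (fun τ hτ => ?_) hK (by positivity)
    (hL.integral_le_of_P_eq_self hs (by linarith) hx)
  have hsτ : s ≤ τ := by linarith [hτ.1]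
  have hgrow := C.norm_U_le_of_P_eq_self (hs.trans hsτ) (by linarith [hτ.2] : τ ≤ t)
    (by rw [C.P_apply_U hs hsτ, hx])
  rw [E.U_apply_U hs hsτ (by linarith [hτ.2])] at hgrow
  calc exp ((γ - ε) * (t - 1) - ω) * ‖E.U t s x‖
      ≤ exp ((γ - ε) * (t - 1) - ω) *
          (M * exp (ε * τ) * exp (ω * (t - τ)) * ‖E.U τ s x‖) := by gcongr
    _ = M * exp ((γ - ε) * (t - 1) - ω + ε * τ + ω * (t - τ)) * ‖E.U τ s x‖ := by
      simp only [exp_add]; ring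
    _ ≤ M * exp (γ * τ) * ‖E.U τ s x‖ := by
      have hM : 0 ≤ M := by linarith [C.hM]
      gcongr M * exp ?_ * _
      nlinarith [hτ.1, hτ.2, C.hω]
    _ = M * (exp (γ * τ) * ‖E.U τ s x‖) := by ring

theorem exp_mul_norm_le_of_P_eq_zero (hK : 1 ≤ K) (hγ : 0 ≤ γ) {t s : ℝ} (hs : 0 ≤ s)
    (hst : s + 1 ≤ t) {x : X} (hx : C.P s x = 0) :
    exp (-γ * (s + 1) - ε * s - ω) * ‖x‖ ≤ M * K * (exp (-(γ - β) * t) * ‖E.U t s x‖) := by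
  have hg : Continuous fun τ => exp (-γ * τ) * ‖E.U τ s x‖ := by
    have := E.continuous_U_left s x
    fun_prop
  refine le_mul_mul_of_integral_sq_le hg (a := s) le_rfl hst (by positivity)
    (by linarith [C.hM]) (fun τ hτ => ?_) hK (by positivity)
    (hL.integral_le_of_P_eq_zero hs (by linarith) hx)
  have hgrow := C.norm_le_of_P_eq_zero hs hτ.1 hx
  have hM : 0 ≤ M := by linarith [C.hM]
  calc exp (-γ * (s + 1) - ε * s - ω) * ‖x‖
      ≤ exp (-γ * (s + 1) - ε * s - ω) *
          (M * exp (ε * s) * exp (ω * (τ - s)) * ‖E.U τ s x‖) := by gcongr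
    _ = M * exp (-γ * (s + 1) - ε * s - ω + ε * s + ω * (τ - s)) * ‖E.U τ s x‖ := by
      simp only [exp_add]; ring
    _ ≤ M * exp (-γ * τ) * ‖E.U τ s x‖ := by
      gcongr M * exp ?_ * _
      nlinarith [hτ.1, hτ.2, C.hω]
    _ = M * (exp (-γ * τ) * ‖E.U τ s x‖) := by ring

theorem norm_U_le_exp_decay_of_P_eq_self (hK : 1 ≤ K) (hγ : ε ≤ γ) (hβ : 0 ≤ β) {t s : ℝ}
    (hs : 0 ≤ s) (hst : s ≤ t) {x : X} (hx : C.P s x = x) :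
    ‖E.U t s x‖ ≤
      M * K * exp (ω + γ + ε) * exp ((β + ε) * s) * exp (-(γ - ε) * (t - s)) * ‖x‖ := by
  have hM : 0 ≤ M := by linarith [C.hM]
  have hε := C.hε
  rw [mul_assoc (M * K), ← exp_add, mul_assoc (M * K), ← exp_add]
  rcases le_or_gt (s + 1) t with hlong | hshort
  · have h := hL.exp_mul_norm_U_le_of_P_eq_self hK hγ hs hlong hx
    rw [← le_div_iff₀' (exp_pos _)] at h
    calc ‖E.U t s x‖
        ≤ M * K * (exp ((γ + β) * s) * ‖x‖) / exp ((γ - ε) * (t - 1) - ω) := h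
      _ = M * K * exp ((γ + β) * s - ((γ - ε) * (t - 1) - ω)) * ‖x‖ := by
        rw [exp_sub ((γ + β) * s)]; ring
      _ ≤ _ := by gcongr; linarith
  · calc ‖E.U t s x‖ ≤ M * exp (ε * s) * exp (ω * (t - s)) * ‖x‖ :=
          C.norm_U_le_of_P_eq_self hs hst hx
      _ = M * exp (ε * s + ω * (t - s)) * ‖x‖ := by rw [exp_add]; ring
      _ ≤ _ := by
        gcongr ?_ * exp ?_ * _
        · exact le_mul_of_one_le_right hM hK
        · nlinarith [C.hω]

theorem norm_le_exp_decay_of_P_eq_zero (hK : 1 ≤ K) (hγ : ε ≤ γ) (hβ : 0 ≤ β) {t s : ℝ}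
    (hs : 0 ≤ s) (hst : s ≤ t) {x : X} (hx : C.P s x = 0) :
    ‖x‖ ≤ M * K * exp (ω + γ + ε) * exp ((β + ε) * t) * exp (-(γ + ε) * (t - s)) *
      ‖E.U t s x‖ := by
  have hM : 0 ≤ M := by linarith [C.hM]
  have hε := C.hε
  rw [mul_assoc (M * K), ← exp_add, mul_assoc (M * K), ← exp_add]
  rcases le_or_gt (s + 1) t with hlong | hshort
  · have h := hL.exp_mul_norm_le_of_P_eq_zero hK (hε.trans hγ) hs hlong hx
    rw [← le_div_iff₀' (exp_pos _)] at h
    calc ‖x‖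
        ≤ M * K * (exp (-(γ - β) * t) * ‖E.U t s x‖) / exp (-γ * (s + 1) - ε * s - ω) := h
      _ = M * K * exp (-(γ - β) * t - (-γ * (s + 1) - ε * s - ω)) * ‖E.U t s x‖ := by
        rw [exp_sub (-(γ - β) * t)]; ring
      _ ≤ _ := by gcongr; linarith
  · calc ‖x‖ ≤ M * exp (ε * s) * exp (ω * (t - s)) * ‖E.U t s x‖ :=
          C.norm_le_of_P_eq_zero hs hst hx
      _ = M * exp (ε * s + ω * (t - s)) * ‖E.U t s x‖ := by rw [exp_add]; ring
      _ ≤ _ := by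
        gcongr ?_ * exp ?_ * _
        · exact le_mul_of_one_le_right hM hK
        · nlinarith [C.hω]

theorem hasExponentialDichotomy (hK : 1 ≤ K) (hγ : ε < γ) (hβ0 : 0 ≤ β) (hβγ : β < γ) :
    C.HasExponentialDichotomy := by
  have hε := C.hε
  have hN : 1 ≤ M * K * exp (ω + γ + ε) :=
    one_le_mul_of_one_le_of_one_le (one_le_mul_of_one_le_of_one_le C.hM hK)
      (one_le_exp (by linarith [C.hω]))
  refine ⟨_, _, β + ε, β + ε, γ - ε, γ + ε, hN, hN, by positivity, by positivity,
    by linarith, by linarith, by linarith, fun t s x hs hst => ?_, fun t s x hs hst => ?_⟩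
  · exact hL.norm_U_le_exp_decay_of_P_eq_self hK hγ.le hβ0 hs hst (C.P_apply_P s x)
  · have hPQ : C.P t (x - C.P t x) = 0 := by rw [map_sub, C.P_apply_P, sub_self]
    have hUQ : E.U t s (C.UQ s t (x - C.P t x)) = x - C.P t x := by
      rw [C.right_inv _ hs hst, hPQ, sub_zero]
    simpa only [hUQ] using hL.norm_le_exp_decay_of_P_eq_zero hK hγ.le hβ0 hs hst
      (C.UQ_range (x - C.P t x) hs hst)

end IsLyapunov

end Compatible

open scoped RealInnerProductSpace in
theorem stmt_18_general {X : Type*} [NormedAddCommGroup X] [InnerProductSpace ℝ X]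
    [CompleteSpace X]
    (E : EvolutionFamily X) (M ε ω : ℝ) (C : Compatible E M ε ω)
    (K γ β : ℝ) (hK : 1 ≤ K) (hγ : ε < γ) (hβ0 : 0 ≤ β) (hβγ : β < γ)
    (H : ℝ → X →L[ℝ] X)
    (hH : ∀ (t : ℝ) (x : X),
      H t x = Real.exp (γ * t) • C.P t x + Real.exp (-γ * t) • (x - C.P t x))
    (W : ℝ → X →L[ℝ] X)
    (h1 : ∀ (t s : ℝ) (x : X), 0 ≤ s → s ≤ t →
      ⟪ContinuousLinearMap.adjoint (E.U t s) (W t (E.U t s x)) +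
          ∫ τ in s..t, ContinuousLinearMap.adjoint (E.U τ s)
            (ContinuousLinearMap.adjoint (H τ) (H τ (E.U τ s x))), x⟫ ≤ ⟪W s x, x⟫)
    (h2 : ∀ (t : ℝ) (x : X), 0 ≤ t →
      |⟪W t x, x⟫| ≤ K * (Real.exp (2 * (γ + β) * t) * ‖C.P t x‖ ^ 2 +
        Real.exp (-2 * (γ - β) * t) * ‖x - C.P t x‖ ^ 2))
    (h3 : ∀ (t : ℝ) (x : X), 0 ≤ t → 0 ≤ ⟪W t (C.P t x), C.P t x⟫)
    (h4 : ∀ (t : ℝ) (x : X), 0 ≤ t → ⟪W t (x - C.P t x), x - C.P t x⟫ ≤ 0) :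
    ∃ N₁ N₂ α₁ α₂ ν₁ ν₂ : ℝ, 1 ≤ N₁ ∧ 1 ≤ N₂ ∧ 0 ≤ α₁ ∧ 0 ≤ α₂ ∧ 0 < ν₁ ∧ 0 < ν₂ ∧
      α₂ < ν₂ ∧
      (∀ (t s : ℝ) (x : X), 0 ≤ s → s ≤ t →
        ‖E.U t s (C.P s x)‖ ≤
          N₁ * Real.exp (α₁ * s) * Real.exp (-ν₁ * (t - s)) * ‖C.P s x‖) ∧
      (∀ (t s : ℝ) (x : X), 0 ≤ s → s ≤ t →
        ‖C.UQ s t (x - C.P t x)‖ ≤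
          N₂ * Real.exp (α₂ * t) * Real.exp (-ν₂ * (t - s)) * ‖x - C.P t x‖) := by
  obtain rfl : H = C.weight γ :=
    funext fun t => ContinuousLinearMap.ext fun x => (hH t x).trans (C.weight_apply γ t x).symm
  refine Compatible.IsLyapunov.hasExponentialDichotomy (L := fun t x => ⟪W t x, x⟫)
    ⟨fun t s x hs hst => ?_, h2, h3, h4⟩ hK hγ hβ0 hβγ
  have h := h1 t s x hs hst
  rwa [inner_add_left, ContinuousLinearMap.adjoint_inner_left,
    inner_intervalIntegral_adjoint_adjoint_apply (E.continuous_U_left s)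
      (C.continuous_weight_apply γ)] at h

open scoped RealInnerProductSpace in
/-- **Hilbert space corollary.**  Let `E` be an evolution family on a Hilbert space `X`
and `P(·)` a compatible projection valued function with constants `M ≥ 1`, `ε ≥ 0`,
`ω > 0`.  Suppose there exist `K ≥ 1`, `γ > ε`, `β ∈ [0,γ)` such that for
`H(t)x = e^{γt}P(t)x + e^{-γt}Q(t)x` there is a strongly continuous self-adjoint
`W : ℝ₊ → B(X)` with
(1) `⟨U(t,s)*W(t)U(t,s)x + ∫_s^t U(τ,s)*H(τ)*H(τ)U(τ,s)x dτ, x⟩ ≤ ⟨W(s)x, x⟩`;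
(2) `|⟨W(t)x,x⟩| ≤ K(e^{2(γ+β)t}‖P(t)x‖² + e^{-2(γ-β)t}‖Q(t)x‖²)`;
(3) `⟨W(t)P(t)x, P(t)x⟩ ≥ 0`; (4) `⟨W(t)Q(t)x, Q(t)x⟩ ≤ 0`,
for all `t ≥ s ≥ 0` and `x ∈ X`.  Then `E` has an exponential dichotomy. -/
theorem stmt_18 {X : Type*} [NormedAddCommGroup X] [InnerProductSpace ℝ X]
    [CompleteSpace X]
    (E : EvolutionFamily X) (M ε ω : ℝ) (C : Compatible E M ε ω)
    (K γ β : ℝ) (hK : 1 ≤ K) (hγ : ε < γ) (hβ0 : 0 ≤ β) (hβγ : β < γ)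
    (H : ℝ → X →L[ℝ] X)
    (hH : ∀ (t : ℝ) (x : X),
      H t x = Real.exp (γ * t) • C.P t x + Real.exp (-γ * t) • (x - C.P t x))
    (W : ℝ → X →L[ℝ] X) (hWcont : ∀ x : X, Continuous fun t : ℝ => W t x)
    (hWsa : ∀ t : ℝ, ContinuousLinearMap.adjoint (W t) = W t)
    (h1 : ∀ (t s : ℝ) (x : X), 0 ≤ s → s ≤ t →
      ⟪ContinuousLinearMap.adjoint (E.U t s) (W t (E.U t s x)) +
          ∫ τ in s..t, ContinuousLinearMap.adjoint (E.U τ s)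
            (ContinuousLinearMap.adjoint (H τ) (H τ (E.U τ s x))), x⟫ ≤ ⟪W s x, x⟫)
    (h2 : ∀ (t : ℝ) (x : X), 0 ≤ t →
      |⟪W t x, x⟫| ≤ K * (Real.exp (2 * (γ + β) * t) * ‖C.P t x‖ ^ 2 +
        Real.exp (-2 * (γ - β) * t) * ‖x - C.P t x‖ ^ 2))
    (h3 : ∀ (t : ℝ) (x : X), 0 ≤ t → 0 ≤ ⟪W t (C.P t x), C.P t x⟫)
    (h4 : ∀ (t : ℝ) (x : X), 0 ≤ t → ⟪W t (x - C.P t x), x - C.P t x⟫ ≤ 0) :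
    ∃ N₁ N₂ α₁ α₂ ν₁ ν₂ : ℝ, 1 ≤ N₁ ∧ 1 ≤ N₂ ∧ 0 ≤ α₁ ∧ 0 ≤ α₂ ∧ 0 < ν₁ ∧ 0 < ν₂ ∧
      α₂ < ν₂ ∧
      (∀ (t s : ℝ) (x : X), 0 ≤ s → s ≤ t →
        ‖E.U t s (C.P s x)‖ ≤
          N₁ * Real.exp (α₁ * s) * Real.exp (-ν₁ * (t - s)) * ‖C.P s x‖) ∧
      (∀ (t s : ℝ) (x : X), 0 ≤ s → s ≤ t →
        ‖C.UQ s t (x - C.P t x)‖ ≤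
          N₂ * Real.exp (α₂ * t) * Real.exp (-ν₂ * (t - s)) * ‖x - C.P t x‖) :=
  stmt_18_general E M ε ω C K γ β hK hγ hβ0 hβγ H hH W h1 h2 h3 h4
end
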